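/- arXiv:1512.01671 — 3 statements merged into one kernel-verified Lean document; each statement's English description precedes it below -/
import Mathlib

section
/- Let d ≥ 1, p ∈ (1,∞), and λ ∈ (−d, (p−1)d). Let η : ℝ^d → [0,∞) be a smooth function supported in the unit ball B_1 with ∫ η = 1, and for ε > 0 set η_ε(x) = ε^{−d} η(x/ε). Then there exists a constant K > 0, independent of ε, such that for every f with ∫_{ℝ^d} |f(x)|^p |x|^λ dx < ∞, the mollification f_ε = η_ε ∗ f satisfies ∫_{ℝ^d} |f_ε(x)|^p |x|^λ dx ≤ K^p ∫_{ℝ^d} |f(x)|^p |x|^λ dx. -/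
open MeasureTheory Filter Metric Set
open scoped Topology ENNReal

noncomputable section

abbrev Ed (d : ℕ) := EuclideanSpace ℝ (Fin d)

/-- Truncated (away from the singularity) fractional-Laplacian integral. -/
noncomputable def fracLapTrunc (d : ℕ) (s : ℝ) (f : Ed d → ℝ) (x : Ed d) (ε : ℝ) : ℝ :=
  ∫ y in {y : Ed d | ε ≤ dist x y}, (f x - f y) / dist x y ^ ((d : ℝ) + 2 * s)

/-- Fractional Laplacian, as a principal value (limit of truncated integrals),
with normalization constant `Cds`. -/
noncomputable def fracLap (d : ℕ) (s Cds : ℝ) (f : Ed d → ℝ) (x : Ed d) : ℝ :=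
  Cds * limUnder (𝓝[>] (0:ℝ)) (fracLapTrunc d s f x)

/-- `V` is the distributional fractional Laplacian of `v`. -/
def IsDistFracLap (d : ℕ) (s Cds : ℝ) (v V : Ed d → ℝ) : Prop :=
  ∀ φ : Ed d → ℝ, ContDiff ℝ (⊤ : ℕ∞) φ → HasCompactSupport φ →
    ∫ x, v x * fracLap d s Cds φ x = ∫ x, V x * φ x

/-- The nonlocal quantity `l_{p,s}(f)(x) = ∫ |f x - f y|^p / |x-y|^{d+ps} dy`. -/
noncomputable def lps (d : ℕ) (p s : ℝ) (f : Ed d → ℝ) (x : Ed d) : ℝ :=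
  ∫ y, |f x - f y| ^ p / dist x y ^ ((d : ℝ) + p * s)

/-- A weight comparable to `|x|^{-γ₀}` on the unit ball and to `|x|^{-γ}` outside. -/
def TwoPowerWeight (d : ℕ) (ρ : Ed d → ℝ) (c C γ₀ γ : ℝ) : Prop :=
  0 < c ∧ c < C ∧
  (∀ᵐ x : Ed d, ‖x‖ ≤ 1 → c * ‖x‖ ^ (-γ₀) ≤ ρ x ∧ ρ x ≤ C * ‖x‖ ^ (-γ₀)) ∧
  (∀ᵐ x : Ed d, 1 < ‖x‖ → c * ‖x‖ ^ (-γ) ≤ ρ x ∧ ρ x ≤ C * ‖x‖ ^ (-γ))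

/-- Standard mollification `f_ε = η_ε ∗ f` with `η_ε(x) = ε^{-d} η(x/ε)`. -/
noncomputable def mollify (d : ℕ) (η : Ed d → ℝ) (ε : ℝ) (f : Ed d → ℝ) (x : Ed d) : ℝ :=
  ∫ y, (ε ^ (-(d:ℝ)) * η (ε⁻¹ • (x - y))) * f y

/-- A smooth nonnegative probability mollifier supported in the unit ball. -/
def IsMollifier (d : ℕ) (η : Ed d → ℝ) : Prop :=
  ContDiff ℝ (⊤ : ℕ∞) η ∧ (∀ x, 0 ≤ η x) ∧ tsupport η ⊆ closedBall (0 : Ed d) 1 ∧ ∫ x, η x = 1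

/-- Membership in the weighted Lebesgue space `L^p(ρ dx)`. -/
def MemWLp (d : ℕ) (p : ℝ) (ρ f : Ed d → ℝ) : Prop :=
  AEStronglyMeasurable f (volume : Measure (Ed d)) ∧
    Integrable (fun x => |f x| ^ p * ρ x)

/-- `v ∈ X_{p,s,ρ}` with distributional fractional Laplacian `V`. -/
def MemX (d : ℕ) (s Cds p : ℝ) (ρ : Ed d → ℝ) (v V : Ed d → ℝ) : Prop :=
  MemWLp d p ρ v ∧ IsDistFracLap d s Cds v V ∧
    MemWLp d (p / (p - 1)) (fun x => ρ x ^ (-(p / (p - 1) - 1))) V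

/-- Weighted `L^p` norm. -/
noncomputable def wNorm (d : ℕ) (p : ℝ) (ρ f : Ed d → ℝ) : ℝ :=
  (∫ x, |f x| ^ p * ρ x) ^ (1 / p)

/-- Norm of the space `X_{p,s,ρ}` (on the pair `(v, (−Δ)^s v)`). -/
noncomputable def xNorm (d : ℕ) (p : ℝ) (ρ : Ed d → ℝ) (v V : Ed d → ℝ) : ℝ :=
  Real.sqrt ((wNorm d p ρ v) ^ 2 +
    (wNorm d (p / (p - 1)) (fun x => ρ x ^ (-(p / (p - 1) - 1))) V) ^ 2)

/-- Riesz potential `I_{d,s} ∗ f` with kernel constant `κ`. -/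
noncomputable def riesz (d : ℕ) (s κ : ℝ) (f : Ed d → ℝ) (x : Ed d) : ℝ :=
  ∫ y, κ * ‖x - y‖ ^ (-((d:ℝ) - 2 * s)) * f y

end
section AuxProof

open scoped NNReal

lemma ed_nontrivial (d : ℕ) (hd : 1 ≤ d) : Nontrivial (Ed d) :=
  Module.nontrivial_of_finrank_pos (R := ℝ) (by rw [finrank_euclideanSpace_fin]; omega)

/-- Integral of `‖x‖ ^ ν` over a ball, with the natural scaling bound. -/
lemma ballInt (d : ℕ) (hd : 1 ≤ d) (ν : ℝ) (hν : -(d:ℝ) < ν) :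
    ∃ C > (0:ℝ), ∀ R > (0:ℝ),
      ∫⁻ x in ball (0:Ed d) R, ENNReal.ofReal (‖x‖ ^ ν) ≤
        ENNReal.ofReal (C * R ^ ((d:ℝ) + ν)) := by
  haveI : Nontrivial (Ed d) := ed_nontrivial d hd
  have htwo : (0:ℝ) < 2 := two_pos
  have hdν : 0 < (d:ℝ) + ν := by linarith
  set b : ℝ := (volume (ball (0:Ed d) 1)).toReal with hbdef
  have hbnn : 0 ≤ b := ENNReal.toReal_nonneg
  have hbfin : volume (ball (0:Ed d) 1) ≠ ⊤ := measure_ball_lt_top.ne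
  set θ : ℝ := 2 ^ (-(d:ℝ) - ν) with hθdef
  have hθpos : 0 < θ := Real.rpow_pos_of_pos htwo _
  have hθlt : θ < 1 := by
    rw [hθdef]
    exact Real.rpow_lt_one_of_one_lt_of_neg one_lt_two (by linarith)
  have h1θ : 0 < 1 - θ := by linarith
  refine ⟨2 ^ |ν| * 2 ^ (-ν) * (b + 1) * (1 - θ)⁻¹, by positivity, ?_⟩
  intro R hR
  set rn : ℕ → ℝ := fun n => R * 2 ^ (-(n:ℝ)) with hrn
  have hrnpos : ∀ n, 0 < rn n := fun n => mul_pos hR (Real.rpow_pos_of_pos htwo _)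
  have hrn_eq : ∀ n : ℕ, rn n = R * (2⁻¹:ℝ) ^ (n:ℕ) := by
    intro n
    show R * (2:ℝ) ^ (-(n:ℝ)) = R * (2⁻¹:ℝ) ^ (n:ℕ)
    rw [Real.rpow_neg htwo.le, Real.rpow_natCast, ← inv_pow]
  have hrnsucc : ∀ n : ℕ, rn n = 2 * rn (n+1) := by
    intro n
    rw [hrn_eq, hrn_eq, pow_succ]
    ring
  have hlog_rn : ∀ n : ℕ, Real.log (rn n) = Real.log R - n * Real.log 2 := by
    intro n
    rw [hrn, Real.log_mul hR.ne' (Real.rpow_pos_of_pos htwo _).ne',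
      Real.log_rpow htwo]
    ring
  set A : ℕ → Set (Ed d) := fun n => {x : Ed d | rn (n+1) ≤ ‖x‖ ∧ ‖x‖ < rn n} with hA
  have hsub : ball (0:Ed d) R ⊆ {0} ∪ ⋃ n, A n := by
    intro x hx
    rcases eq_or_ne x 0 with h0 | h0
    · exact Or.inl (by simp [h0])
    · have hxpos : 0 < ‖x‖ := norm_pos_iff.mpr h0
      have hxR : ‖x‖ < R := by simpa [mem_ball, dist_zero_right] using hx
      have hex : ∃ n : ℕ, rn (n+1) ≤ ‖x‖ := by
        obtain ⟨n, hn⟩ := exists_pow_lt_of_lt_one (div_pos hxpos hR) (by norm_num : (2⁻¹:ℝ) < 1)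
        refine ⟨n, ?_⟩
        have h1 : rn (n+1) ≤ rn n := by
          rw [hrnsucc n]
          nlinarith [hrnpos (n+1)]
        have h2 : rn n < ‖x‖ := by
          rw [hrn_eq]
          rw [lt_div_iff₀ hR] at hn
          calc R * (2⁻¹:ℝ)^n = (2⁻¹:ℝ)^n * R := by ring
            _ < ‖x‖ := hn
        linarith
      classical
      refine Or.inr (mem_iUnion.mpr ⟨Nat.find hex, Nat.find_spec hex, ?_⟩)
      rcases Nat.eq_zero_or_pos (Nat.find hex) with hz | hpos
      · rw [hz]
        have : rn 0 = R := by rw [hrn_eq]; simp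
        rw [this]
        exact hxR
      · have hmin := Nat.find_min hex (Nat.sub_lt hpos one_pos)
        have heq : Nat.find hex - 1 + 1 = Nat.find hex := Nat.succ_pred_eq_of_pos hpos
        rw [heq] at hmin
        exact lt_of_not_ge hmin
  have hterm : ∀ n : ℕ, ∫⁻ x in A n, ENNReal.ofReal (‖x‖ ^ ν)
      ≤ ENNReal.ofReal ((2 ^ |ν| * 2 ^ (-ν) * (b+1) * R ^ ((d:ℝ) + ν)) * θ ^ n) := by
    intro n
    have h2abs : (1:ℝ) ≤ 2 ^ |ν| := by
      rw [← Real.rpow_zero 2]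
      exact Real.rpow_le_rpow_of_exponent_le one_le_two (abs_nonneg ν)
    have hstep1 : ∫⁻ x in A n, ENNReal.ofReal (‖x‖ ^ ν)
        ≤ ∫⁻ _ in A n, ENNReal.ofReal (2 ^ |ν| * rn (n+1) ^ ν) ∂volume := by
      refine setLIntegral_mono measurable_const ?_
      intro x hx
      apply ENNReal.ofReal_le_ofReal
      rcases le_or_gt 0 ν with hν0 | hν0
      · have ha : ‖x‖ ^ ν ≤ (rn n) ^ ν := Real.rpow_le_rpow (norm_nonneg x) hx.2.le hν0
        have hb2 : (rn n) ^ ν = 2 ^ ν * rn (n+1) ^ ν := by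
          rw [hrnsucc n, Real.mul_rpow htwo.le (hrnpos (n+1)).le]
        have hc : (2:ℝ) ^ ν ≤ 2 ^ |ν| :=
          Real.rpow_le_rpow_of_exponent_le one_le_two (le_abs_self ν)
        nlinarith [Real.rpow_nonneg (hrnpos (n+1)).le ν]
      · have ha : ‖x‖ ^ ν ≤ rn (n+1) ^ ν :=
          Real.rpow_le_rpow_of_nonpos (hrnpos (n+1)) hx.1 hν0.le
        nlinarith [Real.rpow_nonneg (hrnpos (n+1)).le ν]
    have hAn : volume (A n) ≤ ENNReal.ofReal (rn n ^ (d:ℕ)) * ENNReal.ofReal b := by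
      have hsub2 : A n ⊆ ball (0:Ed d) (rn n) := fun x hx => mem_ball_zero_iff.mpr hx.2
      calc volume (A n) ≤ volume (ball (0:Ed d) (rn n)) := measure_mono hsub2
        _ = ENNReal.ofReal (rn n ^ Module.finrank ℝ (Ed d)) * volume (ball (0:Ed d) 1) :=
            Measure.addHaar_ball _ _ (hrnpos n).le
        _ = ENNReal.ofReal (rn n ^ (d:ℕ)) * ENNReal.ofReal b := by
            rw [finrank_euclideanSpace_fin, hbdef, ENNReal.ofReal_toReal hbfin]
    have hkey : rn (n+1) ^ ν * rn n ^ (d:ℕ) = 2 ^ (-ν) * R ^ ((d:ℝ)+ν) * θ ^ n := by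
      rw [← Real.rpow_natCast (rn n) d]
      rw [Real.rpow_def_of_pos (hrnpos (n+1)), Real.rpow_def_of_pos (hrnpos n),
        hlog_rn, hlog_rn]
      rw [hθdef, Real.rpow_def_of_pos htwo, Real.rpow_def_of_pos htwo,
        Real.rpow_def_of_pos hR, ← Real.exp_nat_mul, ← Real.exp_add, ← Real.exp_add,
        ← Real.exp_add]
      congr 1
      push_cast
      ring
    calc ∫⁻ x in A n, ENNReal.ofReal (‖x‖ ^ ν)
        ≤ ∫⁻ _ in A n, ENNReal.ofReal (2 ^ |ν| * rn (n+1) ^ ν) ∂volume := hstep1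
      _ = ENNReal.ofReal (2 ^ |ν| * rn (n+1) ^ ν) * volume (A n) := setLIntegral_const _ _
      _ ≤ ENNReal.ofReal (2 ^ |ν| * rn (n+1) ^ ν) *
            (ENNReal.ofReal (rn n ^ (d:ℕ)) * ENNReal.ofReal b) := mul_le_mul_right hAn _
      _ = ENNReal.ofReal (2 ^ |ν| * rn (n+1) ^ ν * (rn n ^ (d:ℕ) * b)) := by
          rw [← ENNReal.ofReal_mul (by positivity), ← ENNReal.ofReal_mul (by positivity)]
      _ ≤ ENNReal.ofReal ((2 ^ |ν| * 2 ^ (-ν) * (b+1) * R ^ ((d:ℝ)+ν)) * θ ^ n) := by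
          apply ENNReal.ofReal_le_ofReal
          have he : 2 ^ |ν| * rn (n+1) ^ ν * (rn n ^ (d:ℕ) * b)
              = (2 ^ |ν| * 2 ^ (-ν) * b * R ^ ((d:ℝ)+ν)) * θ ^ n := by
            linear_combination (2 ^ |ν| * b) * hkey
          rw [he]
          have hθn : (0:ℝ) ≤ θ ^ n := le_of_lt (pow_pos hθpos n)
          have hRp : (0:ℝ) ≤ R ^ ((d:ℝ)+ν) := (Real.rpow_pos_of_pos hR _).le
          have h2ν : (0:ℝ) ≤ 2 ^ (-ν) := (Real.rpow_pos_of_pos htwo _).le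
          have h2a : (0:ℝ) ≤ 2 ^ |ν| := by linarith
          nlinarith [mul_nonneg (mul_nonneg (mul_nonneg h2a h2ν) hRp) hθn]
  calc ∫⁻ x in ball (0:Ed d) R, ENNReal.ofReal (‖x‖ ^ ν)
      ≤ ∫⁻ x in ({0} ∪ ⋃ n, A n : Set (Ed d)), ENNReal.ofReal (‖x‖ ^ ν) :=
        lintegral_mono_set hsub
    _ ≤ (∫⁻ x in ({0} : Set (Ed d)), ENNReal.ofReal (‖x‖ ^ ν))
        + ∫⁻ x in (⋃ n, A n), ENNReal.ofReal (‖x‖ ^ ν) := lintegral_union_le _ _ _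
    _ ≤ 0 + ∑' n, ∫⁻ x in A n, ENNReal.ofReal (‖x‖ ^ ν) := by
        refine add_le_add ?_ (lintegral_iUnion_le _ _)
        rw [setLIntegral_measure_zero _ _ (measure_singleton 0)]
    _ ≤ ∑' n, ENNReal.ofReal ((2 ^ |ν| * 2 ^ (-ν) * (b+1) * R ^ ((d:ℝ)+ν)) * θ ^ n) := by
        rw [zero_add]
        exact ENNReal.tsum_le_tsum hterm
    _ = ENNReal.ofReal (2 ^ |ν| * 2 ^ (-ν) * (b+1) * R ^ ((d:ℝ)+ν))
          * ∑' n, (ENNReal.ofReal θ) ^ n := by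
        rw [← ENNReal.tsum_mul_left]
        refine tsum_congr fun n => ?_
        rw [ENNReal.ofReal_mul (by positivity), ENNReal.ofReal_pow hθpos.le]
    _ = ENNReal.ofReal (2 ^ |ν| * 2 ^ (-ν) * (b+1) * R ^ ((d:ℝ)+ν))
          * ENNReal.ofReal ((1-θ)⁻¹) := by
        rw [ENNReal.tsum_geometric]
        congr 1
        rw [ENNReal.ofReal_inv_of_pos h1θ, ENNReal.ofReal_sub _ hθpos.le,
          ENNReal.ofReal_one]
    _ = ENNReal.ofReal (2 ^ |ν| * 2 ^ (-ν) * (b + 1) * (1 - θ)⁻¹ * R ^ ((d:ℝ) + ν)) := by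
        rw [← ENNReal.ofReal_mul (by positivity)]
        congr 1
        ring

/-- The mollifier kernel, as an `ℝ≥0∞`-valued function. -/
noncomputable def molk (d : ℕ) (η : Ed d → ℝ) (ε : ℝ) (z : Ed d) : ℝ≥0∞ :=
  ENNReal.ofReal (ε ^ (-(d:ℝ)) * η (ε⁻¹ • z))

lemma molk_eq_zero {d : ℕ} (η : Ed d → ℝ) (hη : IsMollifier d η) {ε : ℝ} (hε : 0 < ε)
    {z : Ed d} (h : ε < ‖z‖) : molk d η ε z = 0 := by
  have hz : η (ε⁻¹ • z) = 0 := by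
    apply image_eq_zero_of_notMem_tsupport
    intro hmem
    have hball := hη.2.2.1 hmem
    rw [mem_closedBall, dist_zero_right] at hball
    have hn : ‖ε⁻¹ • z‖ = ε⁻¹ * ‖z‖ := by
      rw [norm_smul, Real.norm_eq_abs, abs_of_pos (inv_pos.mpr hε)]
    rw [hn] at hball
    have h1 : ε⁻¹ * ε < ε⁻¹ * ‖z‖ := by
      exact mul_lt_mul_of_pos_left h (inv_pos.mpr hε)
    rw [inv_mul_cancel₀ hε.ne'] at h1
    linarith
  rw [molk, hz, mul_zero, ENNReal.ofReal_zero]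

lemma molk_le {d : ℕ} (η : Ed d → ℝ) {Cη : ℝ} (hCη : ∀ x, η x ≤ Cη) {ε : ℝ} (hε : 0 < ε)
    (z : Ed d) : molk d η ε z ≤ ENNReal.ofReal (Cη * ε ^ (-(d:ℝ))) := by
  apply ENNReal.ofReal_le_ofReal
  have h1 : (0:ℝ) < ε ^ (-(d:ℝ)) := Real.rpow_pos_of_pos hε _
  have := hCη (ε⁻¹ • z)
  nlinarith

lemma molk_continuous {d : ℕ} (η : Ed d → ℝ) (hη : IsMollifier d η) {ε : ℝ} (hε : 0 < ε) :
    Continuous fun z : Ed d => ε ^ (-(d:ℝ)) * η (ε⁻¹ • z) :=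
  continuous_const.mul (hη.1.continuous.comp (continuous_const_smul ε⁻¹))

lemma molk_base_integral (d : ℕ) (η : Ed d → ℝ) (hη : IsMollifier d η) {ε : ℝ} (hε : 0 < ε) :
    ∫ x : Ed d, ε ^ (-(d:ℝ)) * η (ε⁻¹ • x) = 1 := by
  rw [integral_const_mul, Measure.integral_comp_inv_smul_of_nonneg volume (fun x => η x) hε.le,
    finrank_euclideanSpace_fin, hη.2.2.2, smul_eq_mul, mul_one, ← Real.rpow_natCast ε d,
    ← Real.rpow_add hε, neg_add_cancel, Real.rpow_zero]

lemma molk_hcs {d : ℕ} (η : Ed d → ℝ) (hη : IsMollifier d η) {ε : ℝ} (hε : 0 < ε) (z : Ed d) :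
    HasCompactSupport fun x : Ed d => ε ^ (-(d:ℝ)) * η (ε⁻¹ • (z - x)) := by
  apply HasCompactSupport.intro (isCompact_closedBall z ε)
  intro x hx
  rw [mem_closedBall, dist_comm] at hx
  push_neg at hx
  have h0 : η (ε⁻¹ • (z - x)) = 0 := by
    apply image_eq_zero_of_notMem_tsupport
    intro hmem
    have hball := hη.2.2.1 hmem
    rw [mem_closedBall, dist_zero_right] at hball
    have hn : ‖ε⁻¹ • (z - x)‖ = ε⁻¹ * ‖z - x‖ := by
      rw [norm_smul, Real.norm_eq_abs, abs_of_pos (inv_pos.mpr hε)]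
    rw [hn] at hball
    rw [dist_eq_norm] at hx
    have h1 : ε⁻¹ * ε < ε⁻¹ * ‖z - x‖ := mul_lt_mul_of_pos_left hx (inv_pos.mpr hε)
    rw [inv_mul_cancel₀ hε.ne'] at h1
    linarith
  rw [h0, mul_zero]

lemma molk_nonneg {d : ℕ} (η : Ed d → ℝ) (hη : IsMollifier d η) {ε : ℝ} (hε : 0 < ε)
    (z : Ed d) : 0 ≤ ε ^ (-(d:ℝ)) * η z :=
  mul_nonneg (Real.rpow_pos_of_pos hε _).le (hη.2.1 z)

lemma molk_lintegral_sub_left {d : ℕ} (η : Ed d → ℝ) (hη : IsMollifier d η) {ε : ℝ}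
    (hε : 0 < ε) (z : Ed d) : ∫⁻ x, molk d η ε (z - x) = 1 := by
  have hcont : Continuous fun x : Ed d => ε ^ (-(d:ℝ)) * η (ε⁻¹ • (z - x)) :=
    continuous_const.mul (hη.1.continuous.comp
      ((continuous_const.sub continuous_id).const_smul ε⁻¹))
  have hint : Integrable (fun x : Ed d => ε ^ (-(d:ℝ)) * η (ε⁻¹ • (z - x))) :=
    hcont.integrable_of_hasCompactSupport (molk_hcs η hη hε z)
  have h1 : ∫⁻ x, molk d η ε (z - x)
      = ENNReal.ofReal (∫ x : Ed d, ε ^ (-(d:ℝ)) * η (ε⁻¹ • (z - x))) := by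
    rw [ofReal_integral_eq_lintegral_ofReal hint
      (Filter.Eventually.of_forall fun x => molk_nonneg η hη hε _)]
    rfl
  rw [h1, integral_sub_left_eq_self (fun x : Ed d => ε ^ (-(d:ℝ)) * η (ε⁻¹ • x)) volume z,
    molk_base_integral d η hη hε, ENNReal.ofReal_one]

lemma molk_lintegral_sub_right {d : ℕ} (η : Ed d → ℝ) (hη : IsMollifier d η) {ε : ℝ}
    (hε : 0 < ε) (z : Ed d) : ∫⁻ x, molk d η ε (x - z) = 1 := by
  have hcont : Continuous fun x : Ed d => ε ^ (-(d:ℝ)) * η (ε⁻¹ • (x - z)) :=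
    continuous_const.mul (hη.1.continuous.comp
      ((continuous_id.sub continuous_const).const_smul ε⁻¹))
  have hhcs : HasCompactSupport fun x : Ed d => ε ^ (-(d:ℝ)) * η (ε⁻¹ • (x - z)) := by
    apply HasCompactSupport.intro (isCompact_closedBall z ε)
    intro x hx
    rw [mem_closedBall] at hx
    push_neg at hx
    have h0 : η (ε⁻¹ • (x - z)) = 0 := by
      apply image_eq_zero_of_notMem_tsupport
      intro hmem
      have hball := hη.2.2.1 hmem
      rw [mem_closedBall, dist_zero_right] at hball
      have hn : ‖ε⁻¹ • (x - z)‖ = ε⁻¹ * ‖x - z‖ := by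
        rw [norm_smul, Real.norm_eq_abs, abs_of_pos (inv_pos.mpr hε)]
      rw [hn] at hball
      rw [dist_eq_norm] at hx
      have h1 : ε⁻¹ * ε < ε⁻¹ * ‖x - z‖ := mul_lt_mul_of_pos_left hx (inv_pos.mpr hε)
      rw [inv_mul_cancel₀ hε.ne'] at h1
      linarith
    rw [h0, mul_zero]
  have hint : Integrable (fun x : Ed d => ε ^ (-(d:ℝ)) * η (ε⁻¹ • (x - z))) :=
    hcont.integrable_of_hasCompactSupport hhcs
  have h1 : ∫⁻ x, molk d η ε (x - z)
      = ENNReal.ofReal (∫ x : Ed d, ε ^ (-(d:ℝ)) * η (ε⁻¹ • (x - z))) := by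
    rw [ofReal_integral_eq_lintegral_ofReal hint
      (Filter.Eventually.of_forall fun x => molk_nonneg η hη hε _)]
    rfl
  rw [h1, integral_sub_right_eq_self (fun x : Ed d => ε ^ (-(d:ℝ)) * η (ε⁻¹ • x)) z,
    molk_base_integral d η hη hε, ENNReal.ofReal_one]

end AuxProof

/-- Uniform estimate for integrating `‖x‖ ^ ν` against a kernel of mass ≤ 1 supported in a
ball of radius `ε` around `z` and bounded by `Cη * ε ^ (-d)`. -/
lemma kernelEst (d : ℕ) (ν : ℝ) (Cη C₁ : ℝ) (hCη : 0 ≤ Cη) (hC₁ : 0 < C₁)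
    (hC₁int : ∀ R > (0:ℝ), ∫⁻ x in ball (0:Ed d) R, ENNReal.ofReal (‖x‖ ^ ν) ≤
      ENNReal.ofReal (C₁ * R ^ ((d:ℝ) + ν))) :
    ∃ C > (0:ℝ), ∀ ε > (0:ℝ), ∀ z : Ed d, ∀ k : Ed d → ℝ≥0∞,
      (∫⁻ x, k x) ≤ 1 →
      (∀ x, ε < ‖x - z‖ → k x = 0) →
      (∀ x, k x ≤ ENNReal.ofReal (Cη * ε ^ (-(d:ℝ)))) →
      ∫⁻ x, k x * ENNReal.ofReal (‖x‖ ^ ν) ≤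
        ENNReal.ofReal (C * (max ‖z‖ ε) ^ ν) := by
  have htwo : (0:ℝ) < 2 := two_pos
  have h2abs : (1:ℝ) ≤ 2 ^ |ν| := by
    rw [← Real.rpow_zero 2]
    exact Real.rpow_le_rpow_of_exponent_le one_le_two (abs_nonneg ν)
  refine ⟨2 ^ |ν| + Cη * C₁ * 2 ^ (-ν) + 1, by positivity, ?_⟩
  intro ε hε z k hmass hsupp hbd
  have hCε : (0:ℝ) ≤ Cη * ε ^ (-(d:ℝ)) := mul_nonneg hCη (Real.rpow_pos_of_pos hε _).le
  set M : ℝ := max ‖z‖ ε with hMdef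
  have hεM : ε ≤ M := le_max_right _ _
  have hM : 0 < M := lt_of_lt_of_le hε hεM
  have hM2 : 0 < M / 2 := by positivity
  set S : Set (Ed d) := {x | M/2 ≤ ‖x‖} with hSdef
  have hS : MeasurableSet S := measurableSet_le measurable_const measurable_norm
  have hMν : (0:ℝ) ≤ M ^ ν := (Real.rpow_pos_of_pos hM _).le
  -- part 1 : the integral over S
  have hpart1 : ∫⁻ x in S, k x * ENNReal.ofReal (‖x‖ ^ ν) ≤
      ENNReal.ofReal (2 ^ |ν| * M ^ ν) := by
    have hb1 : ∀ x ∈ S, k x * ENNReal.ofReal (‖x‖ ^ ν) ≤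
        ENNReal.ofReal (2 ^ |ν| * M ^ ν) * k x := by
      intro x hx
      rcases le_or_gt ‖x - z‖ ε with hxz | hxz
      · have hxu : ‖x‖ ≤ 2 * M := by
          have h1 : ‖x‖ - ‖z‖ ≤ ‖x - z‖ := norm_sub_norm_le x z
          have h2 : ‖z‖ ≤ M := le_max_left _ _
          linarith
        have hxl : M/2 ≤ ‖x‖ := hx
        have hw : ‖x‖ ^ ν ≤ 2 ^ |ν| * M ^ ν := by
          rcases le_or_gt 0 ν with hν0 | hν0
          · have ha : ‖x‖ ^ ν ≤ (2*M) ^ ν := Real.rpow_le_rpow (norm_nonneg _) hxu hν0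
            have hb : ((2:ℝ)*M) ^ ν = 2 ^ ν * M ^ ν := Real.mul_rpow htwo.le hM.le
            have hc : (2:ℝ) ^ ν ≤ 2 ^ |ν| :=
              Real.rpow_le_rpow_of_exponent_le one_le_two (le_abs_self ν)
            nlinarith
          · have ha : ‖x‖ ^ ν ≤ (M/2) ^ ν :=
              Real.rpow_le_rpow_of_nonpos hM2 hxl hν0.le
            have hb : ((M:ℝ)/2) ^ ν = 2 ^ (-ν) * M ^ ν := by
              rw [div_eq_mul_inv, Real.mul_rpow hM.le (by positivity),
                Real.inv_rpow htwo.le, ← Real.rpow_neg htwo.le]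
              ring
            have hc : (2:ℝ) ^ (-ν) ≤ 2 ^ |ν| :=
              Real.rpow_le_rpow_of_exponent_le one_le_two (neg_le_abs ν)
            nlinarith
        calc k x * ENNReal.ofReal (‖x‖ ^ ν)
            ≤ k x * ENNReal.ofReal (2 ^ |ν| * M ^ ν) :=
              mul_le_mul_right (ENNReal.ofReal_le_ofReal hw) _
          _ = ENNReal.ofReal (2 ^ |ν| * M ^ ν) * k x := mul_comm _ _
      · rw [hsupp x hxz, zero_mul]
        exact zero_le
    calc ∫⁻ x in S, k x * ENNReal.ofReal (‖x‖ ^ ν)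
        ≤ ∫⁻ x in S, ENNReal.ofReal (2 ^ |ν| * M ^ ν) * k x := setLIntegral_mono' hS hb1
      _ = ENNReal.ofReal (2 ^ |ν| * M ^ ν) * ∫⁻ x in S, k x :=
          lintegral_const_mul' _ _ ENNReal.ofReal_ne_top
      _ ≤ ENNReal.ofReal (2 ^ |ν| * M ^ ν) * 1 :=
          mul_le_mul_right ((setLIntegral_le_lintegral _ _).trans hmass) _
      _ = ENNReal.ofReal (2 ^ |ν| * M ^ ν) := mul_one _
  -- part 2 : the integral over Sᶜ
  have hScomp : Sᶜ = ball (0:Ed d) (M/2) := by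
    ext x
    simp [hSdef, mem_ball_zero_iff, not_le]
  have hpart2 : ∫⁻ x in Sᶜ, k x * ENNReal.ofReal (‖x‖ ^ ν) ≤
      ENNReal.ofReal (Cη * C₁ * 2 ^ (-ν) * M ^ ν) := by
    rcases le_or_gt M (2*ε) with hcase | hcase
    · calc ∫⁻ x in Sᶜ, k x * ENNReal.ofReal (‖x‖ ^ ν)
          ≤ ∫⁻ x in Sᶜ, ENNReal.ofReal (Cη * ε ^ (-(d:ℝ))) * ENNReal.ofReal (‖x‖ ^ ν) :=
            setLIntegral_mono' hS.compl (fun x _ => mul_le_mul_left (hbd x) _)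
        _ = ENNReal.ofReal (Cη * ε ^ (-(d:ℝ))) * ∫⁻ x in Sᶜ, ENNReal.ofReal (‖x‖ ^ ν) :=
            lintegral_const_mul' _ _ ENNReal.ofReal_ne_top
        _ ≤ ENNReal.ofReal (Cη * ε ^ (-(d:ℝ))) * ENNReal.ofReal (C₁ * (M/2) ^ ((d:ℝ) + ν)) := by
            rw [hScomp]
            exact mul_le_mul_right (hC₁int (M/2) hM2) _
        _ ≤ ENNReal.ofReal (Cη * C₁ * 2 ^ (-ν) * M ^ ν) := by
            rw [← ENNReal.ofReal_mul hCε]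
            apply ENNReal.ofReal_le_ofReal
            have hle : ε ^ (-(d:ℝ)) ≤ (M/2) ^ (-(d:ℝ)) :=
              Real.rpow_le_rpow_of_nonpos hM2 (by linarith) (neg_nonpos.mpr (Nat.cast_nonneg d))
            have he1 : ((M:ℝ)/2) ^ (-(d:ℝ)) * (M/2) ^ ((d:ℝ) + ν) = (M/2) ^ ν := by
              rw [← Real.rpow_add hM2]
              ring_nf
            have he2 : ((M:ℝ)/2) ^ ν = 2 ^ (-ν) * M ^ ν := by
              rw [div_eq_mul_inv, Real.mul_rpow hM.le (by positivity),
                Real.inv_rpow htwo.le, ← Real.rpow_neg htwo.le]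
              ring
            have hpos1 : (0:ℝ) < (M/2) ^ ((d:ℝ) + ν) := Real.rpow_pos_of_pos hM2 _
            nlinarith [mul_le_mul_of_nonneg_right hle hpos1.le,
              mul_nonneg hCη hC₁.le]
    · have hMz : M = ‖z‖ := by
        rcases le_total ε ‖z‖ with h1 | h1
        · rw [hMdef, max_eq_left h1]
        · rw [hMdef, max_eq_right h1] at *
          linarith
      have hzero : ∀ x ∈ Sᶜ, k x * ENNReal.ofReal (‖x‖ ^ ν) = 0 := by
        intro x hx
        rw [hScomp, mem_ball_zero_iff] at hx
        have h1 : ‖z‖ - ‖x‖ ≤ ‖z - x‖ := norm_sub_norm_le z x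
        rw [norm_sub_rev] at h1
        have h2 : ε < ‖x - z‖ := by
          rw [← hMz] at h1
          linarith
        rw [hsupp x h2, zero_mul]
      calc ∫⁻ x in Sᶜ, k x * ENNReal.ofReal (‖x‖ ^ ν)
          = ∫⁻ _ in Sᶜ, (0:ℝ≥0∞) ∂volume := by
            apply setLIntegral_congr_fun hS.compl
            exact hzero
        _ = 0 := by simp
        _ ≤ ENNReal.ofReal (Cη * C₁ * 2 ^ (-ν) * M ^ ν) := zero_le
  calc ∫⁻ x, k x * ENNReal.ofReal (‖x‖ ^ ν)
      = (∫⁻ x in S, k x * ENNReal.ofReal (‖x‖ ^ ν))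
        + ∫⁻ x in Sᶜ, k x * ENNReal.ofReal (‖x‖ ^ ν) :=
        (lintegral_add_compl _ hS).symm
    _ ≤ ENNReal.ofReal (2 ^ |ν| * M ^ ν) + ENNReal.ofReal (Cη * C₁ * 2 ^ (-ν) * M ^ ν) :=
        add_le_add hpart1 hpart2
    _ = ENNReal.ofReal (2 ^ |ν| * M ^ ν + Cη * C₁ * 2 ^ (-ν) * M ^ ν) :=
        (ENNReal.ofReal_add (by positivity) (by positivity)).symm
    _ ≤ ENNReal.ofReal ((2 ^ |ν| + Cη * C₁ * 2 ^ (-ν) + 1) * M ^ ν) := by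
        apply ENNReal.ofReal_le_ofReal
        nlinarith [hMν]

/-- Uniform estimate for integrating `‖x‖^lam * max(‖x‖,ε)^(-lam)` against a kernel of
mass ≤ 1 bounded by `Cη * ε ^ (-d)`. -/
lemma phiEst (d : ℕ) (lam : ℝ) (Cη C₁ : ℝ) (hCη : 0 ≤ Cη) (hC₁ : 0 < C₁)
    (hC₁int : ∀ R > (0:ℝ), ∫⁻ x in ball (0:Ed d) R, ENNReal.ofReal (‖x‖ ^ lam) ≤
      ENNReal.ofReal (C₁ * R ^ ((d:ℝ) + lam))) :
    ∀ ε > (0:ℝ), ∀ k : Ed d → ℝ≥0∞,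
      (∫⁻ x, k x) ≤ 1 →
      (∀ x, k x ≤ ENNReal.ofReal (Cη * ε ^ (-(d:ℝ)))) →
      ∫⁻ x, k x * ENNReal.ofReal (‖x‖ ^ lam * (max ‖x‖ ε) ^ (-lam)) ≤
        ENNReal.ofReal (1 + Cη * C₁) := by
  intro ε hε k hmass hbd
  have hCε : (0:ℝ) ≤ Cη * ε ^ (-(d:ℝ)) := mul_nonneg hCη (Real.rpow_pos_of_pos hε _).le
  have hCε2 : (0:ℝ) ≤ Cη * ε ^ (-(d:ℝ)) * ε ^ (-lam) :=
    mul_nonneg hCε (Real.rpow_pos_of_pos hε _).le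
  have h1C : (1:ℝ) ≤ 1 + Cη * C₁ := by nlinarith
  rcases le_or_gt 0 lam with hl | hl
  · -- lam ≥ 0 : the weight is at most 1
    have hφ : ∀ x : Ed d, ENNReal.ofReal (‖x‖ ^ lam * (max ‖x‖ ε) ^ (-lam)) ≤ 1 := by
      intro x
      rw [← ENNReal.ofReal_one]
      apply ENNReal.ofReal_le_ofReal
      have hMx : 0 < max ‖x‖ ε := lt_of_lt_of_le hε (le_max_right _ _)
      have h1 : ‖x‖ ^ lam ≤ (max ‖x‖ ε) ^ lam :=
        Real.rpow_le_rpow (norm_nonneg _) (le_max_left _ _) hl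
      have h2 : (max ‖x‖ ε) ^ lam * (max ‖x‖ ε) ^ (-lam) = 1 := by
        rw [← Real.rpow_add hMx]
        simp
      have h3 : (0:ℝ) ≤ (max ‖x‖ ε) ^ (-lam) := (Real.rpow_pos_of_pos hMx _).le
      nlinarith
    calc ∫⁻ x, k x * ENNReal.ofReal (‖x‖ ^ lam * (max ‖x‖ ε) ^ (-lam))
        ≤ ∫⁻ x, k x * 1 := lintegral_mono fun x => mul_le_mul_right (hφ x) _
      _ = ∫⁻ x, k x := by simp
      _ ≤ 1 := hmass
      _ ≤ ENNReal.ofReal (1 + Cη * C₁) := ENNReal.one_le_ofReal.mpr h1C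
  · -- lam < 0
    set S : Set (Ed d) := {x | ε ≤ ‖x‖} with hSdef
    have hS : MeasurableSet S := measurableSet_le measurable_const measurable_norm
    have hpart1 : ∫⁻ x in S, k x * ENNReal.ofReal (‖x‖ ^ lam * (max ‖x‖ ε) ^ (-lam)) ≤ 1 := by
      have hb : ∀ x ∈ S, k x * ENNReal.ofReal (‖x‖ ^ lam * (max ‖x‖ ε) ^ (-lam)) ≤ k x := by
        intro x hx
        have hx' : ε ≤ ‖x‖ := hx
        have hxpos : 0 < ‖x‖ := lt_of_lt_of_le hε hx'
        have hmax : max ‖x‖ ε = ‖x‖ := max_eq_left hx'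
        have : ‖x‖ ^ lam * (max ‖x‖ ε) ^ (-lam) = 1 := by
          rw [hmax, ← Real.rpow_add hxpos]
          simp
        rw [this, ENNReal.ofReal_one, mul_one]
      calc ∫⁻ x in S, k x * ENNReal.ofReal (‖x‖ ^ lam * (max ‖x‖ ε) ^ (-lam))
          ≤ ∫⁻ x in S, k x := setLIntegral_mono' hS hb
        _ ≤ ∫⁻ x, k x := setLIntegral_le_lintegral _ _
        _ ≤ 1 := hmass
    have hScomp : Sᶜ = ball (0:Ed d) ε := by
      ext x
      simp [hSdef, mem_ball_zero_iff, not_le]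
    have hpart2 : ∫⁻ x in Sᶜ, k x * ENNReal.ofReal (‖x‖ ^ lam * (max ‖x‖ ε) ^ (-lam)) ≤
        ENNReal.ofReal (Cη * C₁) := by
      have hb : ∀ x ∈ Sᶜ, k x * ENNReal.ofReal (‖x‖ ^ lam * (max ‖x‖ ε) ^ (-lam)) ≤
          ENNReal.ofReal (Cη * ε ^ (-(d:ℝ)) * ε ^ (-lam)) * ENNReal.ofReal (‖x‖ ^ lam) := by
        intro x hx
        rw [hScomp, mem_ball_zero_iff] at hx
        have hmax : max ‖x‖ ε = ε := max_eq_right hx.le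
        have he : ENNReal.ofReal (‖x‖ ^ lam * (max ‖x‖ ε) ^ (-lam)) =
            ENNReal.ofReal (ε ^ (-lam)) * ENNReal.ofReal (‖x‖ ^ lam) := by
          rw [hmax, ← ENNReal.ofReal_mul (by positivity)]
          congr 1
          ring
        rw [he, ← mul_assoc]
        apply mul_le_mul_left
        calc k x * ENNReal.ofReal (ε ^ (-lam))
            ≤ ENNReal.ofReal (Cη * ε ^ (-(d:ℝ))) * ENNReal.ofReal (ε ^ (-lam)) :=
              mul_le_mul_left (hbd x) _
          _ = ENNReal.ofReal (Cη * ε ^ (-(d:ℝ)) * ε ^ (-lam)) :=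
              (ENNReal.ofReal_mul hCε).symm
      calc ∫⁻ x in Sᶜ, k x * ENNReal.ofReal (‖x‖ ^ lam * (max ‖x‖ ε) ^ (-lam))
          ≤ ∫⁻ x in Sᶜ, ENNReal.ofReal (Cη * ε ^ (-(d:ℝ)) * ε ^ (-lam))
              * ENNReal.ofReal (‖x‖ ^ lam) := setLIntegral_mono' hS.compl hb
        _ = ENNReal.ofReal (Cη * ε ^ (-(d:ℝ)) * ε ^ (-lam))
              * ∫⁻ x in Sᶜ, ENNReal.ofReal (‖x‖ ^ lam) :=
            lintegral_const_mul' _ _ ENNReal.ofReal_ne_top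
        _ ≤ ENNReal.ofReal (Cη * ε ^ (-(d:ℝ)) * ε ^ (-lam))
              * ENNReal.ofReal (C₁ * ε ^ ((d:ℝ) + lam)) := by
            rw [hScomp]
            exact mul_le_mul_right (hC₁int ε hε) _
        _ ≤ ENNReal.ofReal (Cη * C₁) := by
            rw [← ENNReal.ofReal_mul hCε2]
            apply ENNReal.ofReal_le_ofReal
            have he : ε ^ (-(d:ℝ)) * ε ^ (-lam) * ε ^ ((d:ℝ) + lam) = 1 := by
              rw [← Real.rpow_add hε, ← Real.rpow_add hε]
              ring_nf
              exact Real.rpow_zero ε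
            nlinarith [mul_nonneg hCη hC₁.le]
    calc ∫⁻ x, k x * ENNReal.ofReal (‖x‖ ^ lam * (max ‖x‖ ε) ^ (-lam))
        = (∫⁻ x in S, k x * ENNReal.ofReal (‖x‖ ^ lam * (max ‖x‖ ε) ^ (-lam)))
          + ∫⁻ x in Sᶜ, k x * ENNReal.ofReal (‖x‖ ^ lam * (max ‖x‖ ε) ^ (-lam)) :=
          (lintegral_add_compl _ hS).symm
      _ ≤ 1 + ENNReal.ofReal (Cη * C₁) := add_le_add hpart1 hpart2
      _ = ENNReal.ofReal (1 + Cη * C₁) := by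
          rw [ENNReal.ofReal_add zero_le_one (by positivity), ENNReal.ofReal_one]

theorem stmt1 (d : ℕ) (hd : 1 ≤ d) (p lam : ℝ) (hp : 1 < p)
    (hl1 : -(d:ℝ) < lam) (hl2 : lam < (p - 1) * d)
    (η : Ed d → ℝ) (hη : IsMollifier d η) :
    ∃ K > (0:ℝ), ∀ ε > (0:ℝ), ∀ f : Ed d → ℝ,
      AEStronglyMeasurable f (volume : Measure (Ed d)) →
      Integrable (fun x : Ed d => |f x| ^ p * ‖x‖ ^ lam) →
      Integrable (fun x : Ed d => |mollify d η ε f x| ^ p * ‖x‖ ^ lam) ∧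
      ∫ x : Ed d, |mollify d η ε f x| ^ p * ‖x‖ ^ lam ≤
        K ^ p * ∫ x : Ed d, |f x| ^ p * ‖x‖ ^ lam := by
  classical
  haveI : Nontrivial (Ed d) := ed_nontrivial d hd
  obtain ⟨hηc, hηnn, hηsupp, hηint⟩ := id hη
  have hp0 : (0:ℝ) < p := by linarith
  have hp1 : (0:ℝ) < p - 1 := by linarith
  -- bound for η
  have hηhcs : HasCompactSupport η :=
    IsCompact.of_isClosed_subset (isCompact_closedBall (0:Ed d) 1) (isClosed_tsupport η) hηsupp
  obtain ⟨Cη, hCη'⟩ := hηhcs.exists_bound_of_continuous hηc.continuous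
  have hCη : ∀ x, η x ≤ Cη := fun x => (le_abs_self _).trans (Real.norm_eq_abs (η x) ▸ hCη' x)
  have hCηnn : (0:ℝ) ≤ Cη := (norm_nonneg (η 0)).trans (hCη' 0)
  -- exponents
  set q : ℝ := p / (p - 1) with hq
  have hpq : p.HolderConjugate q := Real.HolderConjugate.conjExponent hp
  have hpq_sum : 1/p + 1/q = 1 := by
    rw [one_div, one_div]
    exact hpq.inv_add_inv_eq_one
  have hpq' : 1/q * p = p - 1 := by
    rw [hq]
    field_simp
  set ν₂ : ℝ := -(lam/(p-1)) with hν₂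
  have hν₂gt : -(d:ℝ) < ν₂ := by
    have h : lam / (p-1) < d := by
      rw [div_lt_iff₀ hp1]
      nlinarith
    rw [hν₂]
    linarith
  obtain ⟨C₁, hC₁pos, hC₁⟩ := ballInt d hd ν₂ hν₂gt
  obtain ⟨C₁', hC₁'pos, hC₁'⟩ := ballInt d hd lam hl1
  obtain ⟨C₂, hC₂pos, hC₂⟩ := kernelEst d ν₂ Cη C₁ hCηnn hC₁pos hC₁
  set C₃ : ℝ := 1 + Cη * C₁' with hC₃def
  have hC₃pos : (0:ℝ) < C₃ := by
    have := mul_nonneg hCηnn hC₁'pos.le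
    rw [hC₃def]
    linarith
  have hC₃ := phiEst d lam Cη C₁' hCηnn hC₁'pos hC₁'
  have hKbase : (0:ℝ) < C₂ ^ (p-1) * C₃ := mul_pos (Real.rpow_pos_of_pos hC₂pos _) hC₃pos
  refine ⟨(C₂ ^ (p-1) * C₃) ^ (1/p), Real.rpow_pos_of_pos hKbase _, ?_⟩
  have hKp : (((C₂ ^ (p-1) * C₃) ^ (1/p)) : ℝ) ^ p = C₂ ^ (p-1) * C₃ := by
    rw [← Real.rpow_mul hKbase.le, one_div, inv_mul_cancel₀ hp0.ne', Real.rpow_one]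
  intro ε hε f hf hfi
  -- notation
  set w : Ed d → ℝ≥0∞ := fun x => ENNReal.ofReal (‖x‖ ^ lam) with hw
  set F : Ed d → ℝ≥0∞ := fun y => ENNReal.ofReal ‖f y‖ with hF
  set kk : Ed d → Ed d → ℝ≥0∞ := fun x y => molk d η ε (x - y) with hkk
  set A : Ed d → ℝ≥0∞ := fun x => ∫⁻ y, kk x y * (w y * F y ^ p) with hA
  set B : Ed d → ℝ≥0∞ := fun x => ∫⁻ y, kk x y * ENNReal.ofReal (‖y‖ ^ ν₂) with hB
  set φ : Ed d → ℝ≥0∞ := fun x => ENNReal.ofReal (‖x‖ ^ lam * (max ‖x‖ ε) ^ (-lam)) with hφ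
  set G : Ed d → ℝ≥0∞ := fun x => ENNReal.ofReal |mollify d η ε f x| ^ p * w x with hG
  set I' : ℝ≥0∞ := ∫⁻ y, w y * F y ^ p with hI'def
  -- basic measurability
  have hFm : AEMeasurable F := hf.norm.aemeasurable.ennreal_ofReal
  have hwm : Measurable w := (measurable_norm.pow measurable_const).ennreal_ofReal
  have hkkm : ∀ x, Measurable fun y => kk x y := by
    intro x
    exact (continuous_const.mul (hηc.continuous.comp
      ((continuous_const.sub continuous_id).const_smul ε⁻¹))).measurable.ennreal_ofReal
  have hφm : Measurable φ :=
    ((measurable_norm.pow measurable_const).mul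
      ((measurable_norm.max measurable_const).pow measurable_const)).ennreal_ofReal
  -- a.e. nonvanishing
  have h0 : ∀ᵐ (y : Ed d), y ≠ 0 := by
    rw [ae_iff]
    have hs : {a : Ed d | ¬ a ≠ 0} = {(0 : Ed d)} := by
      ext a
      simp
    rw [hs]
    exact measure_singleton 0
  -- Step 1 : pointwise domination of the mollification
  have hstep1 : ∀ x, ENNReal.ofReal |mollify d η ε f x| ≤ ∫⁻ y, kk x y * F y := by
    intro x
    rw [mollify]
    calc ENNReal.ofReal |∫ y, (ε ^ (-(d:ℝ)) * η (ε⁻¹ • (x - y))) * f y|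
        = (‖∫ y, (ε ^ (-(d:ℝ)) * η (ε⁻¹ • (x - y))) * f y‖₊ : ℝ≥0∞) :=
          (Real.enorm_eq_ofReal_abs _).symm
      _ ≤ ∫⁻ y, ‖(ε ^ (-(d:ℝ)) * η (ε⁻¹ • (x - y))) * f y‖₊ :=
          enorm_integral_le_lintegral_enorm _
      _ = ∫⁻ y, kk x y * F y := by
          refine lintegral_congr fun y => ?_
          rw [nnnorm_mul, ENNReal.coe_mul]
          congr 1
          · rw [hkk]
            exact Real.enorm_eq_ofReal (molk_nonneg η hη hε _)
          · rw [hF]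
            exact (ofReal_norm (f y)).symm
  -- Step 2 : Hoelder
  have hstep2 : ∀ x, (∫⁻ y, kk x y * F y) ≤ (A x) ^ (1/p) * (B x) ^ (1/q) := by
    intro x
    set g₁ : Ed d → ℝ≥0∞ :=
      fun y => kk x y ^ (1/p) * (ENNReal.ofReal (‖y‖ ^ (lam/p)) * F y) with hg₁
    set g₂ : Ed d → ℝ≥0∞ :=
      fun y => kk x y ^ (1/q) * ENNReal.ofReal (‖y‖ ^ (-(lam/p))) with hg₂
    have hg₁m : AEMeasurable g₁ :=
      (((hkkm x).pow measurable_const).aemeasurable).mul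
        ((((measurable_norm.pow measurable_const).ennreal_ofReal).aemeasurable).mul hFm)
    have hg₂m : AEMeasurable g₂ :=
      (((hkkm x).pow measurable_const).aemeasurable).mul
        (((measurable_norm.pow measurable_const).ennreal_ofReal).aemeasurable)
    have hmul : ∀ᵐ y : Ed d, kk x y * F y = g₁ y * g₂ y := by
      filter_upwards [h0] with y hy
      have hny : 0 < ‖y‖ := norm_pos_iff.mpr hy
      have e1 : kk x y ^ (1/p) * kk x y ^ (1/q) = kk x y := by
        rw [← ENNReal.rpow_add_of_nonneg _ _ (by positivity) (by positivity), hpq_sum,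
          ENNReal.rpow_one]
      have e2 : ENNReal.ofReal (‖y‖ ^ (lam/p)) * ENNReal.ofReal (‖y‖ ^ (-(lam/p))) = 1 := by
        rw [← ENNReal.ofReal_mul (Real.rpow_nonneg (norm_nonneg y) _),
          ← Real.rpow_add hny, add_neg_cancel, Real.rpow_zero, ENNReal.ofReal_one]
      calc kk x y * F y
          = (kk x y ^ (1/p) * kk x y ^ (1/q)) *
              ((ENNReal.ofReal (‖y‖ ^ (lam/p)) * ENNReal.ofReal (‖y‖ ^ (-(lam/p)))) * F y) := by
            rw [e1, e2, one_mul]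
        _ = g₁ y * g₂ y := by
            rw [hg₁, hg₂]
            ring
    have hAx : ∫⁻ y, g₁ y ^ p = A x := by
      rw [hA]
      refine lintegral_congr_ae ?_
      filter_upwards [h0] with y hy
      have hny : 0 < ‖y‖ := norm_pos_iff.mpr hy
      rw [hg₁, ENNReal.mul_rpow_of_nonneg _ _ hp0.le, ENNReal.mul_rpow_of_nonneg _ _ hp0.le,
        ← ENNReal.rpow_mul, one_div, inv_mul_cancel₀ hp0.ne', ENNReal.rpow_one,
        ENNReal.ofReal_rpow_of_pos (Real.rpow_pos_of_pos hny _),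
        ← Real.rpow_mul (norm_nonneg y), div_mul_cancel₀ lam hp0.ne']
    have hBx : ∫⁻ y, g₂ y ^ q = B x := by
      rw [hB]
      refine lintegral_congr_ae ?_
      filter_upwards [h0] with y hy
      have hny : 0 < ‖y‖ := norm_pos_iff.mpr hy
      have hq0 : (0:ℝ) < q := hpq.symm.pos
      have hνq : -(lam/p) * q = ν₂ := by
        rw [hν₂, hq]
        field_simp
      rw [hg₂, ENNReal.mul_rpow_of_nonneg _ _ hq0.le,
        ← ENNReal.rpow_mul, one_div, inv_mul_cancel₀ hq0.ne', ENNReal.rpow_one,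
        ENNReal.ofReal_rpow_of_pos (Real.rpow_pos_of_pos hny _),
        ← Real.rpow_mul (norm_nonneg y), hνq]
    calc (∫⁻ y, kk x y * F y)
        = ∫⁻ y, g₁ y * g₂ y := lintegral_congr_ae hmul
      _ ≤ (∫⁻ y, g₁ y ^ p) ^ (1/p) * (∫⁻ y, g₂ y ^ q) ^ (1/q) :=
          ENNReal.lintegral_mul_le_Lp_mul_Lq volume hpq hg₁m hg₂m
      _ = (A x) ^ (1/p) * (B x) ^ (1/q) := by rw [hAx, hBx]
  -- Step 3 : kernel estimate for B
  have hstep3 : ∀ x, B x ≤ ENNReal.ofReal (C₂ * (max ‖x‖ ε) ^ ν₂) := by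
    intro x
    rw [hB]
    refine hC₂ ε hε x (fun y => kk x y) ?_ ?_ ?_
    · exact le_of_eq (molk_lintegral_sub_left η hη hε x)
    · intro y hy
      rw [hkk]
      exact molk_eq_zero η hη hε (by rwa [norm_sub_rev])
    · intro y
      exact molk_le η hCη hε _
  -- Step 4 : full pointwise bound
  have hstep4 : ∀ x, G x ≤ ENNReal.ofReal (C₂ ^ (p-1)) * (A x * φ x) := by
    intro x
    have hMx : 0 < max ‖x‖ ε := lt_of_lt_of_le hε (le_max_right _ _)
    have h1 : ENNReal.ofReal |mollify d η ε f x| ^ p ≤ A x * B x ^ (p-1) := by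
      calc ENNReal.ofReal |mollify d η ε f x| ^ p
          ≤ ((A x) ^ (1/p) * (B x) ^ (1/q)) ^ p :=
            ENNReal.rpow_le_rpow ((hstep1 x).trans (hstep2 x)) hp0.le
        _ = A x * B x ^ (p-1) := by
            rw [ENNReal.mul_rpow_of_nonneg _ _ hp0.le, ← ENNReal.rpow_mul, ← ENNReal.rpow_mul,
              hpq', one_div, inv_mul_cancel₀ hp0.ne', ENNReal.rpow_one]
    have h2 : B x ^ (p-1) ≤ ENNReal.ofReal (C₂ ^ (p-1) * (max ‖x‖ ε) ^ (-lam)) := by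
      have hνlam : ν₂ * (p-1) = -lam := by
        rw [hν₂]
        field_simp
      calc B x ^ (p-1)
          ≤ (ENNReal.ofReal (C₂ * (max ‖x‖ ε) ^ ν₂)) ^ (p-1) :=
            ENNReal.rpow_le_rpow (hstep3 x) hp1.le
        _ = ENNReal.ofReal ((C₂ * (max ‖x‖ ε) ^ ν₂) ^ (p-1)) :=
            ENNReal.ofReal_rpow_of_pos (mul_pos hC₂pos (Real.rpow_pos_of_pos hMx _))
        _ = ENNReal.ofReal (C₂ ^ (p-1) * (max ‖x‖ ε) ^ (-lam)) := by
            rw [Real.mul_rpow hC₂pos.le (Real.rpow_pos_of_pos hMx _).le,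
              ← Real.rpow_mul hMx.le, hνlam]
    have e : (A x * ENNReal.ofReal (C₂ ^ (p-1) * (max ‖x‖ ε) ^ (-lam)))
        * ENNReal.ofReal (‖x‖ ^ lam)
        = ENNReal.ofReal (C₂ ^ (p-1)) * (A x * φ x) := by
      have hsplit : φ x = ENNReal.ofReal (‖x‖ ^ lam) * ENNReal.ofReal ((max ‖x‖ ε) ^ (-lam)) := by
        simp only [hφ]
        exact ENNReal.ofReal_mul (by positivity)
      rw [hsplit, ENNReal.ofReal_mul ((Real.rpow_pos_of_pos hC₂pos (p-1)).le)]
      ring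
    calc G x = ENNReal.ofReal |mollify d η ε f x| ^ p * ENNReal.ofReal (‖x‖ ^ lam) := by
          simp only [hG, hw]
      _ ≤ (A x * ENNReal.ofReal (C₂ ^ (p-1) * (max ‖x‖ ε) ^ (-lam)))
            * ENNReal.ofReal (‖x‖ ^ lam) :=
          mul_le_mul_left (h1.trans (mul_le_mul_right h2 _)) _
      _ = ENNReal.ofReal (C₂ ^ (p-1)) * (A x * φ x) := e
  -- Step 5 : integrate, Tonelli, and the uniform inner estimate
  have hprod : AEMeasurable
      (Function.uncurry fun x y => (kk x y * (w y * F y ^ p)) * φ x)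
      ((volume : Measure (Ed d)).prod (volume : Measure (Ed d))) := by
    have hkprod : Measurable fun z : Ed d × Ed d => kk z.1 z.2 :=
      (continuous_const.mul (hηc.continuous.comp
        ((continuous_fst.sub continuous_snd).const_smul ε⁻¹))).measurable.ennreal_ofReal
    have hwsnd : Measurable fun z : Ed d × Ed d => w z.2 := hwm.comp measurable_snd
    have hFsnd : AEMeasurable (fun z : Ed d × Ed d => F z.2)
        ((volume : Measure (Ed d)).prod (volume : Measure (Ed d))) :=
      hf.comp_snd.norm.aemeasurable.ennreal_ofReal
    have hφfst : Measurable fun z : Ed d × Ed d => φ z.1 := hφm.comp measurable_fst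
    exact ((hkprod.aemeasurable.mul
      (hwsnd.aemeasurable.mul (hFsnd.pow aemeasurable_const))).mul hφfst.aemeasurable)
  have hswap : ∫⁻ x, A x * φ x = ∫⁻ y, ∫⁻ x, (kk x y * (w y * F y ^ p)) * φ x := by
    have e1 : ∀ x, A x * φ x = ∫⁻ y, (kk x y * (w y * F y ^ p)) * φ x := by
      intro x
      rw [hA]
      exact (lintegral_mul_const' (φ x) _ ENNReal.ofReal_ne_top).symm
    rw [lintegral_congr e1]
    exact lintegral_lintegral_swap hprod
  have hinner : ∀ y : Ed d, (∫⁻ x, (kk x y * (w y * F y ^ p)) * φ x) ≤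
      (w y * F y ^ p) * ENNReal.ofReal C₃ := by
    intro y
    have hfin : w y * F y ^ p ≠ ⊤ :=
      ENNReal.mul_ne_top ENNReal.ofReal_ne_top
        (ENNReal.rpow_ne_top_of_nonneg hp0.le ENNReal.ofReal_ne_top)
    have hrw : ∀ x, (kk x y * (w y * F y ^ p)) * φ x = (w y * F y ^ p) * (kk x y * φ x) :=
      fun x => by ring
    rw [lintegral_congr hrw, lintegral_const_mul' _ _ hfin]
    refine mul_le_mul_right ?_ _
    rw [hC₃def]
    refine hC₃ ε hε (fun x => kk x y) ?_ ?_
    · exact le_of_eq (molk_lintegral_sub_right η hη hε y)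
    · intro x
      exact molk_le η hCη hε _
  have htotal : ∫⁻ x, G x ≤ ENNReal.ofReal (C₂ ^ (p-1)) * (ENNReal.ofReal C₃ * I') := by
    calc ∫⁻ x, G x
        ≤ ∫⁻ x, ENNReal.ofReal (C₂ ^ (p-1)) * (A x * φ x) := lintegral_mono hstep4
      _ = ENNReal.ofReal (C₂ ^ (p-1)) * ∫⁻ x, A x * φ x :=
          lintegral_const_mul' _ _ ENNReal.ofReal_ne_top
      _ = ENNReal.ofReal (C₂ ^ (p-1)) * ∫⁻ y, ∫⁻ x, (kk x y * (w y * F y ^ p)) * φ x := by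
          rw [hswap]
      _ ≤ ENNReal.ofReal (C₂ ^ (p-1)) * ∫⁻ y, (w y * F y ^ p) * ENNReal.ofReal C₃ :=
          mul_le_mul_right (lintegral_mono hinner) _
      _ = ENNReal.ofReal (C₂ ^ (p-1)) * ((∫⁻ y, w y * F y ^ p) * ENNReal.ofReal C₃) := by
          rw [lintegral_mul_const' _ _ ENNReal.ofReal_ne_top]
      _ = ENNReal.ofReal (C₂ ^ (p-1)) * (ENNReal.ofReal C₃ * I') := by
          rw [hI'def, mul_comm (∫⁻ y, w y * F y ^ p) (ENNReal.ofReal C₃)]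
  -- identification of I' with the given integral
  have hfnn : 0 ≤ᵐ[volume] fun x : Ed d => |f x| ^ p * ‖x‖ ^ lam :=
    Filter.Eventually.of_forall fun x => by positivity
  have hI' : ENNReal.ofReal (∫ x, |f x| ^ p * ‖x‖ ^ lam) = I' := by
    rw [hI'def, ofReal_integral_eq_lintegral_ofReal hfi hfnn]
    refine lintegral_congr fun x => ?_
    simp only [hw, hF]
    rw [ENNReal.ofReal_mul (by positivity), mul_comm]
    congr 1
    rw [← Real.norm_eq_abs]
    exact (ENNReal.ofReal_rpow_of_nonneg (norm_nonneg _) hp0.le).symm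
  have hI'fin : I' ≠ ⊤ := by
    rw [← hI']
    exact ENNReal.ofReal_ne_top
  -- measurability of the mollification
  have hmeasm : AEStronglyMeasurable (fun x => mollify d η ε f x) volume := by
    have hker : AEStronglyMeasurable
        (fun z : Ed d × Ed d => (ε ^ (-(d:ℝ)) * η (ε⁻¹ • (z.1 - z.2))) * f z.2)
        ((volume : Measure (Ed d)).prod (volume : Measure (Ed d))) := by
      apply AEStronglyMeasurable.mul
      · exact (continuous_const.mul (hηc.continuous.comp
          ((continuous_fst.sub continuous_snd).const_smul ε⁻¹))).aestronglyMeasurable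
      · exact hf.comp_snd
    exact hker.integral_prod_right'
  have habs : AEMeasurable (fun x => |mollify d η ε f x|) := by
    have := hmeasm.norm.aemeasurable
    simpa only [Real.norm_eq_abs] using this
  have hgm : AEStronglyMeasurable (fun x => |mollify d η ε f x| ^ p * ‖x‖ ^ lam) volume :=
    ((habs.pow aemeasurable_const).mul
      ((measurable_norm.pow measurable_const).aemeasurable)).aestronglyMeasurable
  have hG_ofReal : ∀ x, ENNReal.ofReal (|mollify d η ε f x| ^ p * ‖x‖ ^ lam) = G x := by
    intro x
    simp only [hG, hw]
    rw [ENNReal.ofReal_mul (by positivity)]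
    congr 1
    exact (ENNReal.ofReal_rpow_of_nonneg (abs_nonneg _) hp0.le).symm
  have hgnn : 0 ≤ᵐ[volume] fun x : Ed d => |mollify d η ε f x| ^ p * ‖x‖ ^ lam :=
    Filter.Eventually.of_forall fun x => by positivity
  have hGint : ∫⁻ x, ENNReal.ofReal (|mollify d η ε f x| ^ p * ‖x‖ ^ lam) = ∫⁻ x, G x :=
    lintegral_congr hG_ofReal
  have hRHSfin : ENNReal.ofReal (C₂ ^ (p-1)) * (ENNReal.ofReal C₃ * I') ≠ ⊤ :=
    ENNReal.mul_ne_top ENNReal.ofReal_ne_top (ENNReal.mul_ne_top ENNReal.ofReal_ne_top hI'fin)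
  constructor
  · refine ⟨hgm, ?_⟩
    rw [hasFiniteIntegral_iff_ofReal hgnn, hGint]
    exact lt_of_le_of_lt htotal (lt_top_iff_ne_top.mpr hRHSfin)
  · have hL : ∫ x, |mollify d η ε f x| ^ p * ‖x‖ ^ lam = (∫⁻ x, G x).toReal := by
      rw [integral_eq_lintegral_of_nonneg_ae hgnn hgm, hGint]
    have hR : ∫ x, |f x| ^ p * ‖x‖ ^ lam = I'.toReal := by
      rw [← hI', ENNReal.toReal_ofReal (integral_nonneg fun x => by positivity)]
    rw [hL, hR]
    calc (∫⁻ x, G x).toReal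
        ≤ (ENNReal.ofReal (C₂ ^ (p-1)) * (ENNReal.ofReal C₃ * I')).toReal :=
          ENNReal.toReal_mono hRHSfin htotal
      _ = C₂ ^ (p-1) * (C₃ * I'.toReal) := by
          rw [ENNReal.toReal_mul, ENNReal.toReal_mul,
            ENNReal.toReal_ofReal (Real.rpow_pos_of_pos hC₂pos (p-1)).le,
            ENNReal.toReal_ofReal hC₃pos.le]
      _ = ((C₂ ^ (p-1) * C₃) ^ (1/p)) ^ p * I'.toReal := by
          rw [hKp]
          ring
end

section
/- Let d ≥ 1 and p ∈ (1,∞). The function g(x) = χ_{B_{1/2}}(x) / (|x|^d log|x|) on ℝ^d \ {0} is not locally integrable (it fails to be integrable on any neighborhood of the origin), yet for every λ ≥ (p−1)d one has ∫_{ℝ^d} |g(x)|^p |x|^λ dx < ∞. -/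
open MeasureTheory Filter Metric Set
open scoped Topology ENNReal

lemma radial_lintegral (d : ℕ) (hd : 1 ≤ d) (g : ℝ → ℝ≥0∞) (hg : Measurable g) :
    ∫⁻ x : Ed d, g ‖x‖ =
      ((volume : Measure (Ed d)).toSphere univ) *
        ∫⁻ r in Ioi (0:ℝ), ENNReal.ofReal (r ^ (d-1)) * g r := by
  haveI : Nonempty (Fin d) := ⟨⟨0, hd⟩⟩
  haveI hnt : Nontrivial (Ed d) := inferInstance
  have hdim : Module.finrank ℝ (Ed d) = d := finrank_euclideanSpace_fin
  have h1 : ∫⁻ x : Ed d, g ‖x‖ = ∫⁻ x : ({0}ᶜ : Set (Ed d)), g ‖x.1‖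
      ∂((volume : Measure (Ed d)).comap Subtype.val) := by
    rw [lintegral_subtype_comap (MeasurableSet.compl (measurableSet_singleton _))
      (fun x => g ‖x‖), MeasureTheory.restrict_compl_singleton]
  have hmeas : Measurable (fun z : sphere (0:Ed d) 1 × Ioi (0:ℝ) => g z.2.1) :=
    hg.comp (measurable_subtype_coe.comp measurable_snd)
  have h2 := (Measure.measurePreserving_homeomorphUnitSphereProd
      (volume : Measure (Ed d))).lintegral_comp
      (f := fun z : sphere (0:Ed d) 1 × Ioi (0:ℝ) => g z.2.1) hmeas
  have h2' : ∫⁻ x : ({0}ᶜ : Set (Ed d)), g ‖x.1‖ ∂((volume : Measure (Ed d)).comap Subtype.val)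
      = ∫⁻ z : sphere (0:Ed d) 1 × Ioi (0:ℝ), g z.2.1
      ∂((volume : Measure (Ed d)).toSphere.prod
        (Measure.volumeIoiPow (Module.finrank ℝ (Ed d) - 1))) := by
    simpa only [homeomorphUnitSphereProd_apply_snd_coe] using h2
  rw [h1, h2']
  have h4 : ∫⁻ z : sphere (0:Ed d) 1 × Ioi (0:ℝ), g z.2.1
      ∂((volume : Measure (Ed d)).toSphere.prod
        (Measure.volumeIoiPow (Module.finrank ℝ (Ed d) - 1)))
      = ((volume : Measure (Ed d)).toSphere univ) *
        ∫⁻ r : Ioi (0:ℝ), g r.1 ∂(Measure.volumeIoiPow (Module.finrank ℝ (Ed d) - 1)) := by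
    rw [lintegral_prod _ hmeas.aemeasurable]
    simp [lintegral_const, mul_comm]
  have hdens : Measurable (fun r : Ioi (0:ℝ) => ENNReal.ofReal (r.1 ^ (d-1))) :=
    ENNReal.measurable_ofReal.comp (measurable_subtype_coe.pow_const _)
  have hg' : Measurable (fun r : Ioi (0:ℝ) => g r.1) := hg.comp measurable_subtype_coe
  have h5 : ∫⁻ r : Ioi (0:ℝ), g r.1 ∂(Measure.volumeIoiPow (Module.finrank ℝ (Ed d) - 1))
      = ∫⁻ r in Ioi (0:ℝ), ENNReal.ofReal (r ^ (d-1)) * g r := by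
    rw [Measure.volumeIoiPow, hdim, lintegral_withDensity_eq_lintegral_mul _ hdens hg']
    rw [← lintegral_subtype_comap measurableSet_Ioi
      (fun r : ℝ => ENNReal.ofReal (r ^ (d-1)) * g r)]
    rfl
  rw [h4, h5]

lemma radial_lt_top_iff (d : ℕ) (hd : 1 ≤ d) (g : ℝ → ℝ≥0∞) (hg : Measurable g) :
    (∫⁻ x : Ed d, g ‖x‖) < ⊤ ↔
      (∫⁻ r in Ioi (0:ℝ), ENNReal.ofReal (r ^ (d-1)) * g r) < ⊤ := by
  haveI : Nonempty (Fin d) := ⟨⟨0, hd⟩⟩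
  haveI hnt : Nontrivial (Ed d) := inferInstance
  have hdim : Module.finrank ℝ (Ed d) = d := finrank_euclideanSpace_fin
  have hC0 : (volume : Measure (Ed d)).toSphere univ ≠ 0 := by
    rw [Measure.toSphere_apply_univ, hdim]
    refine mul_ne_zero ?_ ?_
    · simp only [ne_eq, Nat.cast_eq_zero]
      omega
    · exact (measure_ball_pos volume 0 one_pos).ne'
  have hCt : (volume : Measure (Ed d)).toSphere univ ≠ ⊤ := measure_ne_top _ _
  rw [radial_lintegral d hd g hg]
  constructor
  · intro h
    by_contra hcon
    rw [not_lt, top_le_iff] at hcon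
    rw [hcon, ENNReal.mul_top hC0] at h
    exact absurd h (lt_irrefl _)
  · intro h
    exact ENNReal.mul_lt_top hCt.lt_top h

lemma aux_deriv (p : ℝ) (hp : 1 < p) {r : ℝ} (h0 : 0 < r) (h1 : r < 1) :
    HasDerivAt (fun r : ℝ => (p-1)⁻¹ * (-Real.log r) ^ (1-p))
      (r⁻¹ * (-Real.log r) ^ (-p)) r := by
  have hL : 0 < -Real.log r := by
    have := Real.log_neg h0 h1; linarith
  have h1' : HasDerivAt (fun r : ℝ => -Real.log r) (-r⁻¹) r := (Real.hasDerivAt_log h0.ne').neg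
  have h2 : HasDerivAt (fun y : ℝ => y ^ (1-p)) ((1-p) * (-Real.log r) ^ (1-p-1)) (-Real.log r) :=
    Real.hasDerivAt_rpow_const (Or.inl hL.ne')
  have h3 := (h2.comp r h1').const_mul ((p-1)⁻¹)
  refine h3.congr_deriv (Eq.symm ?_)
  have he : 1 - p - 1 = -p := by ring
  rw [he]
  have hpne : p - 1 ≠ 0 := sub_ne_zero.mpr hp.ne'
  field_simp
  ring

lemma aux_int (p : ℝ) (hp : 1 < p) :
    IntegrableOn (fun r : ℝ => r⁻¹ * (-Real.log r) ^ (-p)) (Ioo 0 (1/2 : ℝ)) := by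
  set f : ℝ → ℝ := fun r => r⁻¹ * (-Real.log r) ^ (-p) with hf
  have hcont : ∀ a : ℝ, 0 < a → a ≤ 1/2 → ContinuousOn f (Icc a (1/2)) := by
    intro a ha hab
    have hsub : Icc a (1/2 : ℝ) ⊆ {x : ℝ | x ≠ 0} := by
      intro x hx; exact (lt_of_lt_of_le ha hx.1).ne'
    refine ContinuousOn.mul ?_ ?_
    · exact continuousOn_id.inv₀ fun x hx => (lt_of_lt_of_le ha hx.1).ne'
    · refine ContinuousOn.rpow_const ((Real.continuousOn_log.mono hsub).neg) ?_
      intro x hx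
      left
      have hx1 : x < 1 := lt_of_le_of_lt hx.2 (by norm_num)
      have := Real.log_neg (lt_of_lt_of_le ha hx.1) hx1
      intro h; rw [neg_eq_zero] at h; linarith
  set a : ℕ → ℝ := fun n => (1/2 : ℝ)^(n+2) with ha
  have ha_pos : ∀ n, 0 < a n := fun n => by positivity
  have ha_le : ∀ n, a n ≤ 1/2 := by
    intro n
    calc a n ≤ (1/2:ℝ)^1 := pow_le_pow_of_le_one (by norm_num) (by norm_num) (by omega)
    _ = 1/2 := pow_one _
  have ha_tendsto : Tendsto a atTop (𝓝 0) := by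
    have h := (tendsto_pow_atTop_nhds_zero_of_lt_one (by norm_num : (0:ℝ) ≤ 1/2)
      (by norm_num)).mul_const ((1/2:ℝ)^2)
    rw [zero_mul] at h
    have heq : a = fun n => (1/2:ℝ)^n * (1/2)^2 := funext fun n => pow_add _ n 2
    rw [heq]; exact h
  have hfi : ∀ n, IntegrableOn f (Ioc (a n) (1/2)) :=
    fun n => ((hcont _ (ha_pos n) (ha_le n)).integrableOn_Icc).mono_set Ioc_subset_Icc_self
  have key : IntegrableOn f (Ioc 0 (1/2 : ℝ)) := by
    refine integrableOn_Ioc_of_intervalIntegral_norm_bounded_left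
      (I := (p-1)⁻¹ * (Real.log 2) ^ (1-p)) hfi ha_tendsto ?_
    refine Eventually.of_forall fun n => ?_
    rw [← intervalIntegral.integral_of_le (ha_le n)]
    have hIcc : ∀ x ∈ Icc (a n) (1/2 : ℝ), 0 < x ∧ x < 1 := by
      intro x hx
      exact ⟨lt_of_lt_of_le (ha_pos n) hx.1, lt_of_le_of_lt hx.2 (by norm_num)⟩
    have huIcc : uIcc (a n) (1/2 : ℝ) = Icc (a n) (1/2) := uIcc_of_le (ha_le n)
    have hii : IntervalIntegrable f volume (a n) (1/2) :=
      (intervalIntegrable_iff_integrableOn_Ioc_of_le (ha_le n)).2 (hfi n)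
    have hnorm : ∫ x in a n..(1/2:ℝ), ‖f x‖ = ∫ x in a n..(1/2:ℝ), f x := by
      refine intervalIntegral.integral_congr fun x hx => ?_
      rw [huIcc] at hx
      obtain ⟨hx0, hx1⟩ := hIcc x hx
      have hL : 0 ≤ -Real.log x := by have := Real.log_neg hx0 hx1; linarith
      have : 0 ≤ f x := mul_nonneg (inv_nonneg.2 hx0.le) (Real.rpow_nonneg hL _)
      simp [Real.norm_eq_abs, abs_of_nonneg this]
    have hftc : ∫ x in a n..(1/2:ℝ), f x
        = (p-1)⁻¹ * (-Real.log (1/2)) ^ (1-p) - (p-1)⁻¹ * (-Real.log (a n)) ^ (1-p) := by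
      refine intervalIntegral.integral_eq_sub_of_hasDerivAt
        (f := fun r => (p-1)⁻¹ * (-Real.log r) ^ (1-p)) (fun x hx => ?_) hii
      rw [huIcc] at hx
      obtain ⟨hx0, hx1⟩ := hIcc x hx
      exact aux_deriv p hp hx0 hx1
    rw [hnorm, hftc]
    have hla : -Real.log (1/2 : ℝ) = Real.log 2 := by
      rw [one_div, Real.log_inv]; ring
    rw [hla]
    have h0 : 0 ≤ (p-1)⁻¹ * (-Real.log (a n)) ^ (1-p) := by
      have hL : 0 ≤ -Real.log (a n) := by
        have := Real.log_neg (ha_pos n) (lt_of_le_of_lt (ha_le n) (by norm_num)); linarith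
      exact mul_nonneg (inv_nonneg.2 (by linarith)) (Real.rpow_nonneg hL _)
    linarith
  exact key.mono_set Ioo_subset_Ioc_self

lemma aux_nonint (r' : ℝ) (h0 : 0 < r') (h1 : r' < 1) :
    ¬ IntegrableOn (fun t : ℝ => t⁻¹ * (-Real.log t)⁻¹) (Ioo 0 r') := by
  intro hI
  set φ : ℝ → ℝ := fun t => t⁻¹ * (-Real.log t)⁻¹ with hφ
  set Φ : ℝ → ℝ := fun t => -Real.log (-Real.log t) with hΦ
  have hderiv : ∀ t : ℝ, 0 < t → t < 1 → HasDerivAt Φ (φ t) t := by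
    intro t ht0 ht1
    have hL : 0 < -Real.log t := by have := Real.log_neg ht0 ht1; linarith
    have h1' : HasDerivAt (fun t : ℝ => -Real.log t) (-t⁻¹) t := (Real.hasDerivAt_log ht0.ne').neg
    have h2 : HasDerivAt Real.log (-Real.log t)⁻¹ (-Real.log t) := Real.hasDerivAt_log hL.ne'
    have h3 := (h2.comp t h1').neg
    refine h3.congr_deriv (Eq.symm ?_)
    have hlt0 : Real.log t ≠ 0 := by intro h; rw [h] at hL; simp at hL
    rw [hφ]
    field_simp
  set b : ℝ := r'/2 with hb
  have hb0 : 0 < b := by positivity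
  have hbr : b < r' := by simp [hb]; linarith
  have hφnn : 0 ≤ᵐ[volume.restrict (Ioo 0 r')] φ := by
    filter_upwards [ae_restrict_mem measurableSet_Ioo] with t ht
    have hL : 0 < -Real.log t := by
      have := Real.log_neg ht.1 (ht.2.trans h1); linarith
    exact mul_nonneg (inv_nonneg.2 ht.1.le) (inv_nonneg.2 hL.le)
  set M : ℝ := ∫ t in Ioo 0 r', φ t with hM
  have key : ∀ a : ℝ, a ∈ Ioo 0 b → Φ b - M ≤ Φ a := by
    intro a ha
    have hab : a ≤ b := ha.2.le
    have hsub : Ioc a b ⊆ Ioo 0 r' := fun t ht => ⟨ha.1.trans ht.1, lt_of_le_of_lt ht.2 hbr⟩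
    have hint : IntegrableOn φ (Ioc a b) := hI.mono_set hsub
    have hii : IntervalIntegrable φ volume a b :=
      (intervalIntegrable_iff_integrableOn_Ioc_of_le hab).2 hint
    have hftc : ∫ t in a..b, φ t = Φ b - Φ a := by
      refine intervalIntegral.integral_eq_sub_of_hasDerivAt (fun x hx => ?_) hii
      rw [uIcc_of_le hab] at hx
      exact hderiv x (lt_of_lt_of_le ha.1 hx.1) (lt_of_le_of_lt hx.2 (hbr.trans h1))
    have hle : ∫ t in a..b, φ t ≤ M := by
      rw [intervalIntegral.integral_of_le hab]
      exact setIntegral_mono_set hI hφnn (HasSubset.Subset.eventuallyLE hsub)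
    rw [hftc] at hle
    linarith
  have htend : Tendsto Φ (𝓝[>] (0:ℝ)) atBot := by
    have h1' : Tendsto (fun t : ℝ => -Real.log t) (𝓝[>] 0) atTop :=
      tendsto_neg_atBot_atTop.comp Real.tendsto_log_nhdsGT_zero
    have h2' : Tendsto (fun t : ℝ => Real.log (-Real.log t)) (𝓝[>] 0) atTop :=
      Real.tendsto_log_atTop.comp h1'
    exact tendsto_neg_atTop_atBot.comp h2'
  have hm : ∀ᶠ a in 𝓝[>] (0:ℝ), a ∈ Ioo 0 b :=
    eventually_of_mem (Ioo_mem_nhdsGT hb0) (fun x hx => hx)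
  obtain ⟨a, hlt, ha⟩ :=
    ((htend.eventually (eventually_lt_atBot (Φ b - M))).and hm).exists
  have := key a ha
  linarith

theorem stmt3 (d : ℕ) (hd : 1 ≤ d) (p : ℝ) (hp : 1 < p) :
    (∀ r > (0:ℝ), ¬ IntegrableOn
        (fun x : Ed d =>
          (ball (0 : Ed d) (1/2)).indicator
            (fun x => 1 / (‖x‖ ^ (d:ℝ) * Real.log ‖x‖)) x)
        (ball (0 : Ed d) r)) ∧
    ∀ lam : ℝ, (p - 1) * d ≤ lam →
      Integrable (fun x : Ed d =>
        |(ball (0 : Ed d) (1/2)).indicator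
            (fun x => 1 / (‖x‖ ^ (d:ℝ) * Real.log ‖x‖)) x| ^ p * ‖x‖ ^ lam) := by
  have mf0' : Measurable (fun t : ℝ => 1 / (t ^ (d:ℝ) * Real.log t)) := by
    simp only [one_div]
    exact ((measurable_id.pow_const _).mul Real.measurable_log).inv
  have mabs : Measurable (fun y : ℝ => |y|) := continuous_abs.measurable
  constructor
  · -- Part 1: non-integrability near the origin
    intro r hr H
    set r' : ℝ := min r (1/4) with hr'def
    have hr'0 : 0 < r' := lt_min hr (by norm_num)
    have hr'le : r' ≤ 1/4 := min_le_right _ _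
    have hr'1 : r' < 1 := lt_of_le_of_lt hr'le (by norm_num)
    have hball : ball (0:Ed d) r' ⊆ ball (0:Ed d) (1/2) :=
      ball_subset_ball (le_trans hr'le (by norm_num))
    set f0 : Ed d → ℝ := fun x => 1 / (‖x‖ ^ (d:ℝ) * Real.log ‖x‖) with hf0
    have H2 : IntegrableOn f0 (ball (0:Ed d) r') := by
      have H' := H.mono_set (ball_subset_ball (min_le_left r (1/4)))
      exact H'.congr_fun (fun x hx => indicator_of_mem (hball hx) _) measurableSet_ball
    have H3 : (∫⁻ x in ball (0:Ed d) r', (‖f0 x‖₊ : ℝ≥0∞)) < ⊤ := H2.2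
    set g : ℝ → ℝ≥0∞ := fun t =>
      (Iio r').indicator (fun t => ENNReal.ofReal |1 / (t ^ (d:ℝ) * Real.log t)|) t with hgdef
    have hg : Measurable g :=
      Measurable.indicator (ENNReal.measurable_ofReal.comp (mabs.comp mf0')) measurableSet_Iio
    have hgx : ∀ x : Ed d,
        (ball (0:Ed d) r').indicator (fun x => (‖f0 x‖₊ : ℝ≥0∞)) x = g ‖x‖ := by
      intro x
      by_cases hx : ‖x‖ < r'
      · simp only [hgdef]
        rw [indicator_of_mem (mem_ball_zero_iff.2 hx), indicator_of_mem (mem_Iio.2 hx)]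
        exact Real.enorm_eq_ofReal_abs _
      · simp only [hgdef]
        rw [indicator_of_notMem (fun hmem => hx (mem_ball_zero_iff.1 hmem)),
          indicator_of_notMem (fun hmem => hx (mem_Iio.1 hmem))]
    have H4 : (∫⁻ x : Ed d, g ‖x‖) < ⊤ := by
      have heq : ∫⁻ x : Ed d, g ‖x‖ = ∫⁻ x in ball (0:Ed d) r', (‖f0 x‖₊ : ℝ≥0∞) := by
        rw [← lintegral_indicator measurableSet_ball]
        exact lintegral_congr fun x => (hgx x).symm
      rw [heq]; exact H3
    have H5 := (radial_lt_top_iff d hd g hg).1 H4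
    have hφm : Measurable (fun t : ℝ => t⁻¹ * (-Real.log t)⁻¹) :=
      (measurable_id.inv).mul ((Real.measurable_log.neg).inv)
    have hφnn : 0 ≤ᵐ[volume.restrict (Ioo (0:ℝ) r')] (fun t : ℝ => t⁻¹ * (-Real.log t)⁻¹) := by
      filter_upwards [ae_restrict_mem measurableSet_Ioo] with t ht
      have hL : 0 < -Real.log t := by
        have := Real.log_neg ht.1 (ht.2.trans hr'1); linarith
      exact mul_nonneg (inv_nonneg.2 ht.1.le) (inv_nonneg.2 hL.le)
    have H6 : (∫⁻ t in Ioo (0:ℝ) r', ENNReal.ofReal (t⁻¹ * (-Real.log t)⁻¹)) < ⊤ := by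
      have heq : ∀ t ∈ Ioo (0:ℝ) r', ENNReal.ofReal (t⁻¹ * (-Real.log t)⁻¹)
          = ENNReal.ofReal (t ^ (d-1)) * g t := by
        intro t ht
        obtain ⟨ht0, htr⟩ := ht
        have ht1 : t < 1 := htr.trans hr'1
        have htl : Real.log t < 0 := Real.log_neg ht0 ht1
        have e1 : |1 / (t ^ (d:ℝ) * Real.log t)| = (t ^ (d:ℝ))⁻¹ * (-Real.log t)⁻¹ := by
          rw [one_div, abs_inv, abs_mul, abs_of_pos (Real.rpow_pos_of_pos ht0 _),
            abs_of_neg htl, mul_inv]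
        have e3 : (t:ℝ) ^ (d-1) = t ^ ((d:ℝ) - 1) := by
          rw [← Real.rpow_natCast t (d-1), Nat.cast_sub hd, Nat.cast_one]
        simp only [hgdef]
        rw [indicator_of_mem (mem_Iio.2 htr), e1,
          ← ENNReal.ofReal_mul (by positivity : (0:ℝ) ≤ t ^ (d-1))]
        congr 1
        have key : t ^ ((d:ℝ)-1) * (t ^ (d:ℝ))⁻¹ = t⁻¹ := by
          rw [← Real.rpow_neg ht0.le, ← Real.rpow_add ht0]
          ring_nf
          rw [Real.rpow_neg_one]
        rw [e3, ← key]; ring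
      rw [setLIntegral_congr_fun measurableSet_Ioo heq]
      exact lt_of_le_of_lt (lintegral_mono_set (fun t ht => ht.1)) H5
    have H7 : IntegrableOn (fun t : ℝ => t⁻¹ * (-Real.log t)⁻¹) (Ioo (0:ℝ) r') := by
      refine ⟨hφm.aestronglyMeasurable, ?_⟩
      rw [hasFiniteIntegral_iff_ofReal hφnn]
      exact H6
    exact aux_nonint r' hr'0 hr'1 H7
  · -- Part 2: weighted integrability
    intro lam hlam
    have hp0 : p ≠ 0 := by linarith
    set F : Ed d → ℝ := fun x =>
      |(ball (0 : Ed d) (1/2)).indicator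
        (fun x => 1 / (‖x‖ ^ (d:ℝ) * Real.log ‖x‖)) x| ^ p * ‖x‖ ^ lam with hF
    have hm0 : Measurable (fun x : Ed d =>
        (ball (0 : Ed d) (1/2)).indicator
          (fun x => 1 / (‖x‖ ^ (d:ℝ) * Real.log ‖x‖)) x) :=
      Measurable.indicator (mf0'.comp measurable_norm) measurableSet_ball
    have hm1 : Measurable F :=
      (Measurable.comp (mabs.pow_const p) hm0).mul (measurable_norm.pow_const lam)
    have hFnn : ∀ x, 0 ≤ F x := fun x =>
      mul_nonneg (Real.rpow_nonneg (abs_nonneg _) _) (Real.rpow_nonneg (norm_nonneg _) _)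
    refine ⟨hm1.aestronglyMeasurable, ?_⟩
    rw [hasFiniteIntegral_iff_ofReal (ae_of_all _ hFnn)]
    set g : ℝ → ℝ≥0∞ := fun t => ENNReal.ofReal
      (|(Iio (1/2:ℝ)).indicator (fun t => 1 / (t ^ (d:ℝ) * Real.log t)) t| ^ p * t ^ lam)
      with hgdef
    have hg : Measurable g := by
      apply ENNReal.measurable_ofReal.comp
      exact (Measurable.comp (mabs.pow_const p)
        (Measurable.indicator mf0' measurableSet_Iio)).mul (measurable_id.pow_const lam)
    have hgx : ∀ x : Ed d, ENNReal.ofReal (F x) = g ‖x‖ := by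
      intro x
      by_cases hx : ‖x‖ < 1/2
      · simp only [hF, hgdef]
        rw [indicator_of_mem (mem_ball_zero_iff.2 hx), indicator_of_mem (mem_Iio.2 hx)]
      · simp only [hF, hgdef]
        rw [indicator_of_notMem (fun h => hx (mem_ball_zero_iff.1 h)),
          indicator_of_notMem (fun h => hx (mem_Iio.1 h))]
    have hrw : ∫⁻ x : Ed d, ENNReal.ofReal (F x) = ∫⁻ x : Ed d, g ‖x‖ := lintegral_congr hgx
    rw [hrw, radial_lt_top_iff d hd g hg]
    have hb : ∀ t ∈ Ioi (0:ℝ), ENNReal.ofReal (t ^ (d-1)) * g t ≤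
        (Ioo (0:ℝ) (1/2)).indicator
          (fun t => ENNReal.ofReal (t⁻¹ * (-Real.log t) ^ (-p))) t := by
      intro t ht
      have ht0 : (0:ℝ) < t := ht
      by_cases htr : t < 1/2
      · have ht1 : t < 1 := htr.trans (by norm_num)
        have htl : Real.log t < 0 := Real.log_neg ht0 ht1
        have hL : 0 < -Real.log t := by linarith
        rw [indicator_of_mem (show t ∈ Ioo (0:ℝ) (1/2) from ⟨ht0, htr⟩)]
        simp only [hgdef]
        rw [indicator_of_mem (mem_Iio.2 htr)]
        rw [← ENNReal.ofReal_mul (by positivity : (0:ℝ) ≤ t ^ (d-1))]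
        apply ENNReal.ofReal_le_ofReal
        have e1 : |1 / (t ^ (d:ℝ) * Real.log t)| = (t ^ (d:ℝ))⁻¹ * (-Real.log t)⁻¹ := by
          rw [one_div, abs_inv, abs_mul, abs_of_pos (Real.rpow_pos_of_pos ht0 _),
            abs_of_neg htl, mul_inv]
        have e2 : ((t ^ (d:ℝ))⁻¹ * (-Real.log t)⁻¹) ^ p
            = t ^ (-((d:ℝ)*p)) * (-Real.log t) ^ (-p) := by
          rw [Real.mul_rpow (inv_nonneg.2 (Real.rpow_pos_of_pos ht0 _).le)
            (inv_nonneg.2 hL.le), ← Real.rpow_neg ht0.le, ← Real.rpow_mul ht0.le,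
            Real.inv_rpow hL.le, ← Real.rpow_neg hL.le, neg_mul]
        have e3 : (t:ℝ) ^ (d-1) = t ^ ((d:ℝ) - 1) := by
          rw [← Real.rpow_natCast t (d-1), Nat.cast_sub hd, Nat.cast_one]
        calc t ^ (d-1) * (|1 / (t ^ (d:ℝ) * Real.log t)| ^ p * t ^ lam)
            = t ^ (((d:ℝ)-1) + (-((d:ℝ)*p)) + lam) * (-Real.log t) ^ (-p) := by
              rw [e1, e2, e3, Real.rpow_add ht0, Real.rpow_add ht0]; ring
          _ ≤ t ^ (-1:ℝ) * (-Real.log t) ^ (-p) := by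
              refine mul_le_mul_of_nonneg_right ?_ (Real.rpow_nonneg hL.le _)
              refine Real.rpow_le_rpow_of_exponent_ge ht0 ht1.le ?_
              have hdd : ((d:ℝ)) ≥ 1 := by exact_mod_cast hd
              nlinarith [hlam]
          _ = t⁻¹ * (-Real.log t) ^ (-p) := by rw [Real.rpow_neg_one]
      · rw [indicator_of_notMem (fun h => htr h.2)]
        simp only [hgdef]
        rw [indicator_of_notMem (fun h => htr (mem_Iio.1 h))]
        simp [Real.zero_rpow hp0]
    calc ∫⁻ t in Ioi (0:ℝ), ENNReal.ofReal (t ^ (d-1)) * g t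
        ≤ ∫⁻ t in Ioi (0:ℝ), (Ioo (0:ℝ) (1/2)).indicator
            (fun t => ENNReal.ofReal (t⁻¹ * (-Real.log t) ^ (-p))) t :=
          setLIntegral_mono (Measurable.indicator (ENNReal.measurable_ofReal.comp
            ((measurable_id.inv).mul ((Real.measurable_log.neg).pow_const _))) measurableSet_Ioo) hb
      _ ≤ ∫⁻ t, (Ioo (0:ℝ) (1/2)).indicator
            (fun t => ENNReal.ofReal (t⁻¹ * (-Real.log t) ^ (-p))) t :=
          setLIntegral_le_lintegral _ _
      _ = ∫⁻ t in Ioo (0:ℝ) (1/2), ENNReal.ofReal (t⁻¹ * (-Real.log t) ^ (-p)) :=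
          lintegral_indicator measurableSet_Ioo _
      _ < ⊤ := Integrable.lintegral_lt_top (aux_int p hp)
end

section
/- Let d ≥ 1, s ∈ (0,1), p ∈ (1,∞), and φ ∈ C_c^∞(ℝ^d). Define l_{p,s}(φ)(x) = ∫_{ℝ^d} |φ(x)−φ(y)|^p / |x−y|^{d+ps} dy. Then l_{p,s}(φ) is a continuous function on ℝ^d and there exists K > 0 such that l_{p,s}(φ)(x) ≤ K (1+|x|)^{−d−ps} for all x ∈ ℝ^d. -/
open MeasureTheory Filter Metric Set
open scoped Topology ENNReal

lemma myIntegrableOn_ball_rpow (d : ℕ) (hd : 1 ≤ d) {b : ℝ} (hb : -(d:ℝ) < b) (hb0 : b < 0) :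
    MeasureTheory.IntegrableOn (fun z : Ed d => ‖z‖ ^ b) (Metric.ball (0 : Ed d) 1) := by
  have hmeas : Measurable fun z : Ed d => ‖z‖ ^ b := by fun_prop
  refine ⟨hmeas.aestronglyMeasurable.restrict, ?_⟩
  rw [hasFiniteIntegral_iff_ofReal (ae_of_all _ fun z => Real.rpow_nonneg (norm_nonneg z) b)]
  rw [lintegral_eq_lintegral_meas_le _ (ae_of_all _ fun z => Real.rpow_nonneg (norm_nonneg z) b)
    hmeas.aemeasurable]
  have hc : (d:ℝ) / b < -1 := (div_lt_iff_of_neg hb0).2 (by linarith)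
  calc ∫⁻ t in Ioi (0:ℝ), (volume.restrict (Metric.ball (0:Ed d) 1)) {a : Ed d | t ≤ ‖a‖ ^ b}
      ≤ ∫⁻ t in Ioc (0:ℝ) 1 ∪ Ioi 1, (volume.restrict (Metric.ball (0:Ed d) 1)) {a : Ed d | t ≤ ‖a‖ ^ b} :=
        lintegral_mono_set Ioi_subset_Ioc_union_Ioi
    _ ≤ (∫⁻ t in Ioc (0:ℝ) 1, (volume.restrict (Metric.ball (0:Ed d) 1)) {a : Ed d | t ≤ ‖a‖ ^ b})
        + ∫⁻ t in Ioi (1:ℝ), (volume.restrict (Metric.ball (0:Ed d) 1)) {a : Ed d | t ≤ ‖a‖ ^ b} :=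
        lintegral_union_le _ _ _
    _ < ∞ := by
        refine ENNReal.add_lt_top.2 ⟨?_, ?_⟩
        · calc ∫⁻ t in Ioc (0:ℝ) 1, (volume.restrict (Metric.ball (0:Ed d) 1)) {a : Ed d | t ≤ ‖a‖ ^ b}
              ≤ ∫⁻ _ in Ioc (0:ℝ) 1, (volume.restrict (Metric.ball (0:Ed d) 1)) univ :=
                setLIntegral_mono' measurableSet_Ioc fun t _ => measure_mono (subset_univ _)
            _ = (volume.restrict (Metric.ball (0:Ed d) 1)) univ * volume (Ioc (0:ℝ) 1) :=
                setLIntegral_const _ _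
            _ < ∞ := by
                refine ENNReal.mul_lt_top ?_ ?_
                · rw [Measure.restrict_apply_univ]; exact measure_ball_lt_top
                · rw [Real.volume_Ioc]; exact ENNReal.ofReal_lt_top
        · have hCB : ∀ t : ℝ, t ∈ Ioi (1:ℝ) → (volume.restrict (Metric.ball (0:Ed d) 1)) {a : Ed d | t ≤ ‖a‖ ^ b}
              ≤ ENNReal.ofReal (t ^ ((d:ℝ)/b)) * volume (Metric.ball (0:Ed d) 1) := by
            intro t ht
            have ht0 : (0:ℝ) < t := lt_trans one_pos ht
            have hsub : {a : Ed d | t ≤ ‖a‖ ^ b} ⊆ Metric.closedBall 0 (t ^ b⁻¹) := by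
              intro a ha
              simp only [mem_setOf_eq] at ha
              have ha0 : a ≠ 0 := by
                rintro rfl
                rw [norm_zero, Real.zero_rpow hb0.ne] at ha; linarith
              have hna : 0 < ‖a‖ := norm_pos_iff.2 ha0
              rw [Metric.mem_closedBall, dist_zero_right]
              exact (Real.le_rpow_inv_iff_of_neg hna ht0 hb0).2 ha
            calc (volume.restrict (Metric.ball (0:Ed d) 1)) {a : Ed d | t ≤ ‖a‖ ^ b}
                ≤ volume {a : Ed d | t ≤ ‖a‖ ^ b} := Measure.restrict_apply_le _ _
              _ ≤ volume (Metric.closedBall (0:Ed d) (t ^ b⁻¹)) := measure_mono hsub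
              _ = ENNReal.ofReal ((t ^ b⁻¹) ^ (Module.finrank ℝ (Ed d))) * volume (Metric.ball (0:Ed d) 1) :=
                  Measure.addHaar_closedBall _ _ (Real.rpow_nonneg ht0.le _)
              _ = _ := by
                  rw [finrank_euclideanSpace, Fintype.card_fin, ← Real.rpow_natCast (t ^ b⁻¹) d,
                    ← Real.rpow_mul ht0.le, inv_mul_eq_div]
          calc ∫⁻ t in Ioi (1:ℝ), (volume.restrict (Metric.ball (0:Ed d) 1)) {a : Ed d | t ≤ ‖a‖ ^ b}
              ≤ ∫⁻ t in Ioi (1:ℝ), ENNReal.ofReal (t ^ ((d:ℝ)/b)) * volume (Metric.ball (0:Ed d) 1) :=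
                setLIntegral_mono' measurableSet_Ioi hCB
            _ = (∫⁻ t in Ioi (1:ℝ), ENNReal.ofReal (t ^ ((d:ℝ)/b))) * volume (Metric.ball (0:Ed d) 1) :=
                lintegral_mul_const' _ _ measure_ball_lt_top.ne
            _ < ∞ := by
                refine ENNReal.mul_lt_top ?_ measure_ball_lt_top
                have hint : IntegrableOn (fun t : ℝ => t ^ ((d:ℝ)/b)) (Ioi (1:ℝ)) :=
                  integrableOn_Ioi_rpow_of_lt hc one_pos
                have h2 := hint.2
                rwa [hasFiniteIntegral_iff_ofReal ((ae_restrict_iff' measurableSet_Ioi).2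
                  (ae_of_all _ fun t ht => Real.rpow_nonneg
                    (le_of_lt (lt_trans one_pos (mem_Ioi.1 ht))) _))] at h2

lemma myAeNeZero (d : ℕ) (hd : 1 ≤ d) : ∀ᵐ z : Ed d, z ≠ (0 : Ed d) := by
  have : Nonempty (Fin d) := ⟨⟨0, hd⟩⟩
  have : Nontrivial (Ed d) := inferInstance
  rw [ae_iff]
  simpa [Set.setOf_eq_eq_singleton] using measure_singleton (0 : Ed d)

lemma myIntegrableBound (d : ℕ) (hd : 1 ≤ d) {p a : ℝ} (hp : 0 < p) (ha : (d:ℝ) < a)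
    (hpa : -(d:ℝ) < p - a) :
    MeasureTheory.Integrable (fun z : Ed d => min ‖z‖ 1 ^ p * ‖z‖ ^ (-a)) := by
  have hd1 : (1:ℝ) ≤ (d:ℝ) := by exact_mod_cast hd
  have ha0 : 0 < a := by linarith
  have hmeas : Measurable fun z : Ed d => min ‖z‖ 1 ^ p * ‖z‖ ^ (-a) := by fun_prop
  have hnn : ∀ z : Ed d, 0 ≤ min ‖z‖ 1 ^ p * ‖z‖ ^ (-a) := fun z =>
    mul_nonneg (Real.rpow_nonneg (le_min (norm_nonneg z) zero_le_one) _)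
      (Real.rpow_nonneg (norm_nonneg z) _)
  set b : ℝ := min (p - a) (-2⁻¹) with hbdef
  have hbne : -(d:ℝ) < b := lt_min hpa (by linarith)
  have hb0 : b < 0 := lt_of_le_of_lt (min_le_right _ _) (by norm_num)
  have hball : MeasureTheory.IntegrableOn (fun z : Ed d => min ‖z‖ 1 ^ p * ‖z‖ ^ (-a))
      (Metric.ball (0 : Ed d) 1) := by
    refine (myIntegrableOn_ball_rpow d hd hbne hb0).mono' hmeas.aestronglyMeasurable.restrict ?_
    filter_upwards [ae_restrict_mem measurableSet_ball,
      MeasureTheory.ae_restrict_of_ae (myAeNeZero d hd)] with z hz hz0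
    rw [mem_ball_zero_iff] at hz
    have hz0' : 0 < ‖z‖ := norm_pos_iff.2 hz0
    rw [Real.norm_eq_abs, abs_of_nonneg (hnn z), min_eq_left hz.le,
      ← Real.rpow_add hz0', ← sub_eq_add_neg]
    exact Real.rpow_le_rpow_of_exponent_ge hz0' hz.le (min_le_left _ _)
  have hcompl : MeasureTheory.IntegrableOn (fun z : Ed d => min ‖z‖ 1 ^ p * ‖z‖ ^ (-a))
      (Metric.ball (0 : Ed d) 1)ᶜ := by
    have hdom : MeasureTheory.Integrable (fun z : Ed d => (2:ℝ) ^ a * (1 + ‖z‖) ^ (-a)) := by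
      refine (integrable_one_add_norm ?_).const_mul _
      rw [finrank_euclideanSpace, Fintype.card_fin]; exact ha
    refine hdom.integrableOn.mono' hmeas.aestronglyMeasurable.restrict ?_
    filter_upwards [ae_restrict_mem measurableSet_ball.compl] with z hz
    simp only [Set.mem_compl_iff, Metric.mem_ball, dist_zero_right, not_lt] at hz
    have hz0 : (0:ℝ) < ‖z‖ := lt_of_lt_of_le one_pos hz
    rw [Real.norm_eq_abs, abs_of_nonneg (hnn z), min_eq_right hz, Real.one_rpow, one_mul]
    calc ‖z‖ ^ (-a) ≤ ((1 + ‖z‖)/2) ^ (-a) :=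
          Real.rpow_le_rpow_of_nonpos (by linarith) (by linarith) (neg_nonpos.2 ha0.le)
      _ = 2 ^ a * (1 + ‖z‖) ^ (-a) := by
          rw [Real.div_rpow (by linarith) (by norm_num : (0:ℝ) ≤ 2),
            Real.rpow_neg (by norm_num : (0:ℝ) ≤ 2), div_eq_mul_inv, inv_inv, mul_comm]
  rw [← MeasureTheory.integrableOn_univ, ← Set.union_compl_self (Metric.ball (0 : Ed d) 1)]
  exact hball.union hcompl

lemma lps_shift (d : ℕ) (p s : ℝ) (φ : Ed d → ℝ) (x : Ed d) :
    lps d p s φ x = ∫ z : Ed d, |φ x - φ (x + z)| ^ p / ‖z‖ ^ ((d:ℝ) + p * s) := by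
  rw [lps, ← MeasureTheory.integral_add_left_eq_self
    (fun y : Ed d => |φ x - φ y| ^ p / dist x y ^ ((d:ℝ) + p * s)) x]
  refine integral_congr_ae (ae_of_all _ fun z => ?_)
  have hdz : dist x (x + z) = ‖z‖ := by rw [dist_eq_norm]; simp
  simp only [hdz]


theorem stmt5 (d : ℕ) (hd : 1 ≤ d) (s : ℝ) (hs : s ∈ Set.Ioo (0:ℝ) 1)
    (p : ℝ) (hp : 1 < p)
    (φ : Ed d → ℝ) (hφ : ContDiff ℝ (⊤ : ℕ∞) φ) (hφc : HasCompactSupport φ) :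
    Continuous (lps d p s φ) ∧
    ∃ K > (0:ℝ), ∀ x : Ed d,
      lps d p s φ x ≤ K * (1 + ‖x‖) ^ (-((d:ℝ) + p * s)) := by
  obtain ⟨hs0, hs1⟩ := hs
  have hp0 : (0:ℝ) < p := lt_trans one_pos hp
  have hd1 : (1:ℝ) ≤ (d:ℝ) := by exact_mod_cast hd
  set A : ℝ := (d:ℝ) + p * s with hA
  have hdA : (d:ℝ) < A := by nlinarith
  have hA0 : 0 < A := by linarith
  have hpA : -(d:ℝ) < p - A := by nlinarith
  -- Lipschitz constant and sup bound
  obtain ⟨L, hL⟩ := ContDiff.lipschitzWith_of_hasCompactSupport hφc hφ (by simp)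
  obtain ⟨M, hM⟩ := hφc.exists_bound_of_continuous hφ.continuous
  set C₀ : ℝ := max (L:ℝ) (M + M) with hC₀def
  have hC₀ : 0 ≤ C₀ := le_trans L.coe_nonneg (le_max_left _ _)
  have key : ∀ x z : Ed d, |φ x - φ (x + z)| ≤ C₀ * min ‖z‖ 1 := by
    intro x z
    rcases le_total ‖z‖ 1 with h | h
    · rw [min_eq_left h]
      have h2 : dist (φ x) (φ (x + z)) ≤ (L:ℝ) * dist x (x + z) := hL.dist_le_mul _ _
      have h3 : dist x (x + z) = ‖z‖ := by rw [dist_eq_norm]; simp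
      rw [Real.dist_eq, h3] at h2
      calc |φ x - φ (x + z)| ≤ (L:ℝ) * ‖z‖ := h2
        _ ≤ C₀ * ‖z‖ := mul_le_mul_of_nonneg_right (le_max_left _ _) (norm_nonneg z)
    · rw [min_eq_right h]
      calc |φ x - φ (x + z)| = ‖φ x - φ (x + z)‖ := (Real.norm_eq_abs _).symm
        _ ≤ ‖φ x‖ + ‖φ (x + z)‖ := norm_sub_le _ _
        _ ≤ M + M := add_le_add (hM x) (hM _)
        _ ≤ C₀ := le_max_right _ _
        _ = C₀ * 1 := (mul_one _).symm
  -- Continuity via dominated convergence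
  have hcont : Continuous (lps d p s φ) := by
    have hrw : lps d p s φ = fun x => ∫ z : Ed d, |φ x - φ (x + z)| ^ p / ‖z‖ ^ A := by
      funext x; rw [lps_shift, hA]
    rw [hrw]
    have hnum : ∀ x : Ed d, Continuous fun z : Ed d => |φ x - φ (x + z)| ^ p := fun x =>
      (Real.continuous_rpow_const hp0.le).comp
        ((continuous_const.sub (hφ.continuous.comp (continuous_const.add continuous_id))).abs)
    have hnum2 : ∀ z : Ed d, Continuous fun x : Ed d => |φ x - φ (x + z)| ^ p := fun z =>
      (Real.continuous_rpow_const hp0.le).comp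
        ((hφ.continuous.sub (hφ.continuous.comp (continuous_id.add continuous_const))).abs)
    refine continuous_of_dominated (bound := fun z : Ed d => C₀ ^ p * (min ‖z‖ 1 ^ p * ‖z‖ ^ (-A)))
      (fun x => ((hnum x).measurable.div (by fun_prop : Measurable fun z : Ed d => ‖z‖ ^ A)).aestronglyMeasurable)
      (fun x => ae_of_all _ fun z => ?_)
      ((myIntegrableBound d hd hp0 hdA hpA).const_mul _)
      (ae_of_all _ fun z => (hnum2 z).div_const _)
    have hdvnn : 0 ≤ |φ x - φ (x + z)| ^ p / ‖z‖ ^ A := by positivity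
    rw [Real.norm_eq_abs, abs_of_nonneg hdvnn]
    have h1 : |φ x - φ (x + z)| ^ p ≤ C₀ ^ p * min ‖z‖ 1 ^ p := by
      rw [← Real.mul_rpow hC₀ (le_min (norm_nonneg z) zero_le_one)]
      exact Real.rpow_le_rpow (abs_nonneg _) (key x z) hp0.le
    calc |φ x - φ (x + z)| ^ p / ‖z‖ ^ A = |φ x - φ (x + z)| ^ p * (‖z‖ ^ A)⁻¹ :=
          div_eq_mul_inv _ _
      _ ≤ (C₀ ^ p * min ‖z‖ 1 ^ p) * (‖z‖ ^ A)⁻¹ :=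
          mul_le_mul_of_nonneg_right h1 (inv_nonneg.2 (Real.rpow_nonneg (norm_nonneg z) _))
      _ = C₀ ^ p * (min ‖z‖ 1 ^ p * ‖z‖ ^ (-A)) := by
          rw [Real.rpow_neg (norm_nonneg z)]; ring
  refine ⟨hcont, ?_⟩
  -- support radius
  obtain ⟨R₀, hR₀⟩ := hφc.isBounded.subset_closedBall (0 : Ed d)
  set R : ℝ := max R₀ 0 with hRdef
  have hR0 : 0 ≤ R := le_max_right _ _
  have hRsub : tsupport φ ⊆ Metric.closedBall (0:Ed d) R :=
    hR₀.trans (Metric.closedBall_subset_closedBall (le_max_left _ _))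
  -- integral of |φ|^p
  have hIφint : Integrable (fun y : Ed d => |φ y| ^ p) := by
    apply Continuous.integrable_of_hasCompactSupport
    · exact (Real.continuous_rpow_const hp0.le).comp hφ.continuous.abs
    · exact hφc.comp_left (g := fun t : ℝ => |t| ^ p) (by simp [Real.zero_rpow hp0.ne'])
  set Iφ : ℝ := ∫ y : Ed d, |φ y| ^ p with hIφdef
  have hIφ0 : 0 ≤ Iφ := integral_nonneg fun y => Real.rpow_nonneg (abs_nonneg _) _
  -- far field estimate
  have far : ∀ x : Ed d, 2*R + 1 ≤ ‖x‖ →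
      lps d p s φ x ≤ Iφ * (3 ^ A * (1 + ‖x‖) ^ (-A)) := by
    intro x hx
    have hφx : φ x = 0 := by
      apply image_eq_zero_of_notMem_tsupport
      intro hmem
      have := mem_closedBall_zero_iff.1 (hRsub hmem)
      linarith
    have keyy : ∀ y : Ed d, |φ x - φ y| ^ p / dist x y ^ A
        ≤ |φ y| ^ p * (3 ^ A * (1 + ‖x‖) ^ (-A)) := by
      intro y
      by_cases hy : y ∈ tsupport φ
      · have hyR : ‖y‖ ≤ R := mem_closedBall_zero_iff.1 (hRsub hy)
        have hd1' : (1 + ‖x‖)/3 ≤ dist x y := by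
          have h := norm_sub_norm_le x y
          rw [dist_eq_norm]; linarith
        have hd0 : (0:ℝ) < (1 + ‖x‖)/3 := by positivity
        have hdenom : ((1 + ‖x‖)/3) ^ A ≤ dist x y ^ A :=
          Real.rpow_le_rpow hd0.le hd1' hA0.le
        have hsplit : ((1 + ‖x‖)/3 : ℝ) ^ (-A) = 3 ^ A * (1 + ‖x‖) ^ (-A) := by
          rw [Real.div_rpow (by positivity) (by norm_num : (0:ℝ) ≤ 3),
            Real.rpow_neg (by norm_num : (0:ℝ) ≤ 3), div_eq_mul_inv, inv_inv, mul_comm]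
        calc |φ x - φ y| ^ p / dist x y ^ A = |φ y| ^ p / dist x y ^ A := by
              rw [hφx, zero_sub, abs_neg]
          _ ≤ |φ y| ^ p / ((1 + ‖x‖)/3) ^ A := by
              apply div_le_div_of_nonneg_left (by positivity) (Real.rpow_pos_of_pos hd0 A) hdenom
          _ = |φ y| ^ p * (((1 + ‖x‖)/3) ^ (-A)) := by
              rw [Real.rpow_neg hd0.le, div_eq_mul_inv]
          _ = |φ y| ^ p * (3 ^ A * (1 + ‖x‖) ^ (-A)) := by rw [hsplit]
      · have hφy : φ y = 0 := image_eq_zero_of_notMem_tsupport hy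
        have hzero : |φ x - φ y| = 0 := by rw [hφx, hφy]; simp
        rw [hzero, Real.zero_rpow hp0.ne', zero_div]
        positivity
    have step : lps d p s φ x ≤ ∫ y : Ed d, |φ y| ^ p * (3 ^ A * (1 + ‖x‖) ^ (-A)) := by
      rw [lps, ← hA]
      exact integral_mono_of_nonneg (ae_of_all _ fun y => by positivity)
        (hIφint.mul_const _) (ae_of_all _ keyy)
    calc lps d p s φ x ≤ ∫ y : Ed d, |φ y| ^ p * (3 ^ A * (1 + ‖x‖) ^ (-A)) := step
      _ = Iφ * (3 ^ A * (1 + ‖x‖) ^ (-A)) := integral_mul_const _ _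
  -- near field: maximum on a compact ball
  obtain ⟨x₀, hx₀mem, hx₀⟩ := (isCompact_closedBall (0:Ed d) (2*R+1)).exists_isMaxOn
      ⟨0, by rw [mem_closedBall_zero_iff, norm_zero]; linarith⟩ hcont.continuousOn
  set M₁ : ℝ := max (lps d p s φ x₀) 0 + 1 with hM₁def
  have hM₁0 : 0 < M₁ := by positivity
  have hK1 : 0 ≤ M₁ * (2 + 2*R) ^ A := mul_nonneg hM₁0.le (Real.rpow_nonneg (by linarith) _)
  have hK2 : 0 ≤ Iφ * 3 ^ A := mul_nonneg hIφ0 (Real.rpow_nonneg (by norm_num) _)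
  refine ⟨M₁ * (2 + 2*R) ^ A + Iφ * 3 ^ A + 1, by linarith, fun x => ?_⟩
  have hw0 : (0:ℝ) < 1 + ‖x‖ := by positivity
  have hw : 0 < (1 + ‖x‖) ^ (-A) := Real.rpow_pos_of_pos hw0 _
  rcases le_or_gt ‖x‖ (2*R+1) with hx | hx
  · have h1 : lps d p s φ x ≤ max (lps d p s φ x₀) 0 :=
      le_trans (hx₀ (by rwa [mem_closedBall_zero_iff])) (le_max_left _ _)
    have h4 : lps d p s φ x ≤ M₁ := by rw [hM₁def]; linarith
    have h2 : (1 + ‖x‖) ^ A ≤ (2 + 2*R) ^ A :=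
      Real.rpow_le_rpow (by positivity) (by linarith) hA0.le
    have h3 : (1:ℝ) ≤ (2 + 2*R) ^ A * (1 + ‖x‖) ^ (-A) := by
      rw [Real.rpow_neg hw0.le, ← div_eq_mul_inv, le_div_iff₀ (Real.rpow_pos_of_pos hw0 _)]
      simpa using h2
    have h5 : M₁ * 1 ≤ M₁ * ((2 + 2*R) ^ A * (1 + ‖x‖) ^ (-A)) :=
      mul_le_mul_of_nonneg_left h3 hM₁0.le
    have h6 : 0 ≤ (Iφ * 3 ^ A) * (1 + ‖x‖) ^ (-A) := mul_nonneg hK2 hw.le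
    nlinarith [hw, h4, h5, h6]
  · have h7 := far x hx.le
    have h8 : 0 ≤ (M₁ * (2 + 2*R) ^ A + 1) * (1 + ‖x‖) ^ (-A) :=
      mul_nonneg (by linarith) hw.le
    nlinarith [h7, h8]
end
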